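/- arXiv:2305.06848 — 7 statements merged into one kernel-verified Lean document; each statement's English description precedes it below -/
import Mathlib

section
/- Let f₁,…,fₙ : ℝ^d → ℝ be differentiable and f = (1/n)∑_{i=1}^n fᵢ. Fix x ∈ ℝ^d and points y₁,…,yₙ ∈ ℝ^d, and set v = (1/n)∑_{i=1}^n ∇fᵢ(yᵢ). Let I = (i₁,…,i_b) be a random batch of size b from {1,…,n} and define the SAGA gradient estimator g̃(I) = (1/b)∑_{j=1}^b (∇f_{i_j}(x) − ∇f_{i_j}(y_{i_j})) + v. Then E‖g̃(I) − ∇f(x)‖² = (1/(bn))∑_{i=1}^n ‖∇fᵢ(x) − ∇fᵢ(yᵢ)‖² − (1/b)‖v − ∇f(x)‖²; in particular E‖g̃(I) − ∇f(x)‖² ≤ (1/(bn))∑_{i=1}^n ‖∇fᵢ(x) − ∇fᵢ(yᵢ)‖². -/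
/-!
Write `Zᵢ = ∇fᵢ(x) − ∇fᵢ(yᵢ)` and `μ` for their mean, so that `v − ∇f(x) = −μ` and
`g̃(I) − ∇f(x) = (1/b) ∑ⱼ Wᵢⱼ` with the centred vectors `Wᵢ = Zᵢ − μ`. Since the `Wᵢ` sum to zero,
the cross terms `⟪Wᵢⱼ, Wᵢₖ⟫`, `j ≠ k`, average to zero over the batches, so the second moment of
`∑ⱼ Wᵢⱼ` is `b` times the mean of `‖Wᵢ‖²`; and the mean of `‖Wᵢ‖²` is the mean of `‖Zᵢ‖²` minus
`‖μ‖²`.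
-/

open Finset

section Gradient

variable {F ι : Type*} [NormedAddCommGroup F] [InnerProductSpace ℝ F] [CompleteSpace F]

theorem gradient_const_mul_sum (s : Finset ι) (c : ℝ) (f : ι → F → ℝ) {x : F}
    (hf : ∀ i ∈ s, DifferentiableAt ℝ (f i) x) :
    gradient (fun w => c * ∑ i ∈ s, f i w) x = c • ∑ i ∈ s, gradient (f i) x := by
  have hderiv : HasFDerivAt (fun w => c * ∑ i ∈ s, f i w) (c • ∑ i ∈ s, fderiv ℝ (f i) x) x :=
    (HasFDerivAt.fun_sum fun i hi => (hf i hi).hasFDerivAt).const_mul c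
  rw [gradient, hderiv.fderiv, map_smul, map_sum]
  rfl

end Gradient

section Minibatch

variable {E ι : Type*} [NormedAddCommGroup E] [InnerProductSpace ℝ E] [Fintype ι]

theorem sum_norm_add_sq_of_sum_eq_zero {W : ι → E} (hW : ∑ i, W i = 0) (s : E) :
    ∑ i, ‖W i + s‖ ^ 2 = ∑ i, ‖W i‖ ^ 2 + Fintype.card ι * ‖s‖ ^ 2 := by
  have hcross : ∑ i, inner ℝ (W i) s = 0 := by rw [← sum_inner, hW, inner_zero_left]
  simp only [norm_add_sq_real, sum_add_distrib, ← mul_sum, hcross, sum_const, card_univ,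
    nsmul_eq_mul]
  ring

theorem sum_sub_mean_eq_zero (Z : ι → E) :
    ∑ i, (Z i - (Fintype.card ι : ℝ)⁻¹ • ∑ j, Z j) = 0 := by
  rcases isEmpty_or_nonempty ι with hι | hι
  · simp
  rw [sum_sub_distrib, sum_const, card_univ, ← Nat.cast_smul_eq_nsmul ℝ, smul_smul,
    mul_inv_cancel₀ (by positivity), one_smul, sub_self]

theorem sum_norm_sub_mean_sq (Z : ι → E) :
    ∑ i, ‖Z i - (Fintype.card ι : ℝ)⁻¹ • ∑ j, Z j‖ ^ 2 =
      ∑ i, ‖Z i‖ ^ 2 - Fintype.card ι * ‖(Fintype.card ι : ℝ)⁻¹ • ∑ j, Z j‖ ^ 2 := by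
  rw [eq_sub_iff_add_eq, ← sum_norm_add_sq_of_sum_eq_zero (sum_sub_mean_eq_zero Z)]
  simp only [sub_add_cancel]

theorem card_mul_sum_norm_sq_sum_comp {W : ι → E} (hW : ∑ i, W i = 0) (b : ℕ) :
    Fintype.card ι * ∑ I : Fin b → ι, ‖∑ j, W (I j)‖ ^ 2 =
      b * Fintype.card ι ^ b * ∑ i, ‖W i‖ ^ 2 := by
  induction b with
  | zero => simp
  | succ b ih =>
    have hsplit : ∑ I : Fin (b + 1) → ι, ‖∑ j, W (I j)‖ ^ 2 =
        ∑ J : Fin b → ι, ∑ i, ‖W i + ∑ j, W (J j)‖ ^ 2 := by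
      rw [← (Fin.consEquiv fun _ => ι).sum_comp, Fintype.sum_prod_type_right]
      simp [Fin.consEquiv, Fin.sum_univ_succ]
    simp only [hsplit, sum_norm_add_sq_of_sum_eq_zero hW, sum_add_distrib, sum_const, card_univ,
      Fintype.card_fun, Fintype.card_fin, nsmul_eq_mul, ← mul_sum]
    push_cast
    linear_combination (Fintype.card ι : ℝ) * ih

theorem sum_norm_sq_minibatch_mean_sub_mean (Z : ι → E) {b : ℕ} (hb : b ≠ 0) :
    (1 / (Fintype.card ι : ℝ) ^ b) *
        ∑ I : Fin b → ι, ‖(1 / (b : ℝ)) • ∑ j, Z (I j) - (Fintype.card ι : ℝ)⁻¹ • ∑ i, Z i‖ ^ 2 =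
      (1 / ((b : ℝ) * Fintype.card ι)) * ∑ i, ‖Z i‖ ^ 2 -
        (1 / (b : ℝ)) * ‖(Fintype.card ι : ℝ)⁻¹ • ∑ i, Z i‖ ^ 2 := by
  rcases isEmpty_or_nonempty ι with hι | hι
  · simp [zero_pow hb]
  set n : ℝ := (Fintype.card ι : ℝ)
  set μ := n⁻¹ • ∑ i, Z i
  have hb' : (b : ℝ) ≠ 0 := Nat.cast_ne_zero.mpr hb
  have hn : n ≠ 0 := by positivity
  have hbatch : ∀ I : Fin b → ι,
      (1 / (b : ℝ)) • ∑ j, Z (I j) - μ = (1 / (b : ℝ)) • ∑ j, (Z (I j) - μ) := by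
    intro I
    rw [sum_sub_distrib, sum_const, card_univ, Fintype.card_fin, ← Nat.cast_smul_eq_nsmul ℝ,
      smul_sub, smul_smul, one_div_mul_cancel hb', one_smul]
  have hmoment := card_mul_sum_norm_sq_sum_comp (sum_sub_mean_eq_zero Z) b
  simp only [hbatch, norm_smul, mul_pow, Real.norm_eq_abs, sq_abs, ← mul_sum]
  rw [sum_norm_sub_mean_sq] at hmoment
  have hS : ∑ I : Fin b → ι, ‖∑ j, (Z (I j) - μ)‖ ^ 2 =
      b * n ^ b * (∑ i, ‖Z i‖ ^ 2 - n * ‖μ‖ ^ 2) / n := by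
    rw [eq_div_iff hn, mul_comm]
    exact hmoment
  rw [hS]
  field_simp

end Minibatch

theorem stmt_1_general (d n b : ℕ) (hb : 0 < b)
    (f : Fin n → EuclideanSpace ℝ (Fin d) → ℝ)
    (hf : ∀ i, Differentiable ℝ (f i))
    (F : EuclideanSpace ℝ (Fin d) → ℝ)
    (hF : F = fun w => (1 / (n : ℝ)) * ∑ i, f i w)
    (x : EuclideanSpace ℝ (Fin d)) (y : Fin n → EuclideanSpace ℝ (Fin d))
    (v : EuclideanSpace ℝ (Fin d))
    (hv : v = (1 / (n : ℝ)) • ∑ i, gradient (f i) (y i))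
    (g : (Fin b → Fin n) → EuclideanSpace ℝ (Fin d))
    (hg : ∀ I : Fin b → Fin n,
      g I = (1 / (b : ℝ)) •
          (∑ j, (gradient (f (I j)) x - gradient (f (I j)) (y (I j)))) + v) :
    (1 / (n : ℝ) ^ b) * ∑ I : Fin b → Fin n, ‖g I - gradient F x‖ ^ 2 =
        (1 / ((b : ℝ) * (n : ℝ))) *
            ∑ i, ‖gradient (f i) x - gradient (f i) (y i)‖ ^ 2 -
          (1 / (b : ℝ)) * ‖v - gradient F x‖ ^ 2 ∧
      (1 / (n : ℝ) ^ b) * ∑ I : Fin b → Fin n, ‖g I - gradient F x‖ ^ 2 ≤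
        (1 / ((b : ℝ) * (n : ℝ))) *
          ∑ i, ‖gradient (f i) x - gradient (f i) (y i)‖ ^ 2 := by
  have hgradF : gradient F x = (1 / (n : ℝ)) • ∑ i, gradient (f i) x := by
    rw [hF]
    exact gradient_const_mul_sum _ _ f fun i _ => (hf i).differentiableAt
  set Z := fun i => gradient (f i) x - gradient (f i) (y i)
  have hvF : v - gradient F x = -((n : ℝ)⁻¹ • ∑ i, Z i) := by
    rw [hv, hgradF, one_div, ← smul_sub, ← smul_neg, ← sum_sub_distrib, ← sum_neg_distrib]
    simp only [Z, neg_sub]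
  have hgI : ∀ I, g I - gradient F x =
      (1 / (b : ℝ)) • ∑ j, Z (I j) - (n : ℝ)⁻¹ • ∑ i, Z i := by
    intro I
    rw [hg I, add_sub_assoc, hvF, sub_eq_add_neg]
  have hidentity : (1 / (n : ℝ) ^ b) * ∑ I : Fin b → Fin n, ‖g I - gradient F x‖ ^ 2 =
      (1 / ((b : ℝ) * (n : ℝ))) * ∑ i, ‖Z i‖ ^ 2 - (1 / (b : ℝ)) * ‖v - gradient F x‖ ^ 2 := by
    simpa only [hgI, hvF, norm_neg, Fintype.card_fin] using sum_norm_sq_minibatch_mean_sub_mean Z hb.ne'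
  refine ⟨hidentity, hidentity ▸ sub_le_self _ (by positivity)⟩

/-- Error identity and bound for the SAGA gradient estimator.
`f = (1/n) ∑ᵢ fᵢ`, `v = (1/n) ∑ᵢ ∇fᵢ(yᵢ)`, and for a batch `I = (i₁, …, i_b)` of indices drawn
independently and uniformly from `{1, …, n}` (expectation = average over all `n^b` tuples),
`g̃(I) = (1/b) ∑ⱼ (∇f_{iⱼ}(x) − ∇f_{iⱼ}(y_{iⱼ})) + v`. Then
`E ‖g̃(I) − ∇f(x)‖² = (1/(bn)) ∑ᵢ ‖∇fᵢ(x) − ∇fᵢ(yᵢ)‖² − (1/b) ‖v − ∇f(x)‖²`, and in particular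
`E ‖g̃(I) − ∇f(x)‖² ≤ (1/(bn)) ∑ᵢ ‖∇fᵢ(x) − ∇fᵢ(yᵢ)‖²`. -/
theorem stmt_1 (d n b : ℕ) (hn : 0 < n) (hb : 0 < b)
    (f : Fin n → EuclideanSpace ℝ (Fin d) → ℝ)
    (hf : ∀ i, Differentiable ℝ (f i))
    (F : EuclideanSpace ℝ (Fin d) → ℝ)
    (hF : F = fun w => (1 / (n : ℝ)) * ∑ i, f i w)
    (x : EuclideanSpace ℝ (Fin d)) (y : Fin n → EuclideanSpace ℝ (Fin d))
    (v : EuclideanSpace ℝ (Fin d))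
    (hv : v = (1 / (n : ℝ)) • ∑ i, gradient (f i) (y i))
    (g : (Fin b → Fin n) → EuclideanSpace ℝ (Fin d))
    (hg : ∀ I : Fin b → Fin n,
      g I = (1 / (b : ℝ)) •
          (∑ j, (gradient (f (I j)) x - gradient (f (I j)) (y (I j)))) + v) :
    (1 / (n : ℝ) ^ b) * ∑ I : Fin b → Fin n, ‖g I - gradient F x‖ ^ 2 =
        (1 / ((b : ℝ) * (n : ℝ))) *
            ∑ i, ‖gradient (f i) x - gradient (f i) (y i)‖ ^ 2 -
          (1 / (b : ℝ)) * ‖v - gradient F x‖ ^ 2 ∧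
      (1 / (n : ℝ) ^ b) * ∑ I : Fin b → Fin n, ‖g I - gradient F x‖ ^ 2 ≤
        (1 / ((b : ℝ) * (n : ℝ))) *
          ∑ i, ‖gradient (f i) x - gradient (f i) (y i)‖ ^ 2 :=
  stmt_1_general d n b hb f hf F hF x y v hv g hg
end

section
/- Let f₁,…,fₙ : ℝ^d → ℝ be differentiable and satisfy the average smoothness condition with constant L > 0. Let n ≥ 1 and 1 ≤ b ≤ n be integers, let I be a uniformly random b-element subset of {1,…,n}, fix x ∈ ℝ^d and stored points y₁,…,yₙ ∈ ℝ^d, and for each subset I define yᵢ^I = x if i ∈ I and yᵢ^I = yᵢ otherwise. Then for any function x⁺ assigning to each b-element subset I a point x⁺(I) ∈ ℝ^d, one has E[(1/(bn))∑_{i=1}^n ‖∇fᵢ(x⁺(I)) − ∇fᵢ(yᵢ^I)‖²] ≤ (1 − b/(2n))·(1/(bn))∑_{i=1}^n ‖∇fᵢ(x) − ∇fᵢ(yᵢ)‖² + ((2n − b)L²/b²)·E‖x⁺(I) − x‖², where E denotes the average over all b-element subsets I of {1,…,n}. -/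
/-!
For `i ∉ I` write `∇fᵢ(x⁺) − ∇fᵢ(yᵢ) = (∇fᵢ(x⁺) − ∇fᵢ(x)) + (∇fᵢ(x) − ∇fᵢ(yᵢ))` and use
`‖a + b‖² ≤ α‖a‖² + γ‖b‖²` with `α = (2n − b)/b`, `γ = (2n − b)/(2(n − b))`, so that
`α⁻¹ + γ⁻¹ = 1`; for `i ∈ I` only the first part is present and `α ≥ 1`. Average smoothness
bounds the `α`-part by `α n L² ‖x⁺ − x‖²`. Averaged over `I`, each index lies outside a
fraction `(n − b)/n` of the batches, and `γ (n − b)/n = 1 − b/(2n)`.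
-/

open Finset

theorem norm_add_sq_le_of_inv_add_inv_le_one {E : Type*} [SeminormedAddCommGroup E] (a b : E)
    {α γ : ℝ} (hα : 0 < α) (hγ : 0 < γ) (hαγ : α⁻¹ + γ⁻¹ ≤ 1) :
    ‖a + b‖ ^ 2 ≤ α * ‖a‖ ^ 2 + γ * ‖b‖ ^ 2 := by
  have hprod : α + γ ≤ α * γ := by
    have := mul_le_mul_of_nonneg_left hαγ (mul_pos hα hγ).le
    field_simp at this
    linarith
  have hα1 : 1 < α := by
    by_contra! h
    nlinarith
  calc ‖a + b‖ ^ 2 ≤ (‖a‖ + ‖b‖) ^ 2 := by gcongr; exact norm_add_le a b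
    _ ≤ α * ‖a‖ ^ 2 + γ * ‖b‖ ^ 2 := by
      nlinarith [sq_nonneg ((α - 1) * ‖a‖ - ‖b‖), norm_nonneg a, norm_nonneg b, sq_nonneg ‖b‖]

theorem Finset.sum_powersetCard_sum_compl {ι M : Type*} [Fintype ι] [DecidableEq ι]
    [AddCommMonoid M] (k : ℕ) (g : ι → M) :
    ∑ I ∈ powersetCard k univ, ∑ i ∈ Iᶜ, g i = (Fintype.card ι - 1).choose k • ∑ i, g i := by
  rw [sum_comm' (t' := univ) (s' := fun i => powersetCard k {i}ᶜ)]
  · simp only [sum_const, card_powersetCard, card_compl, card_singleton, smul_sum]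
  · intro I i
    simp [subset_compl_singleton, and_comm]

theorem Finset.inv_choose_mul_sum_powersetCard_sum_compl {ι : Type*} [Fintype ι] [DecidableEq ι]
    {k : ℕ} (hk : k ≤ Fintype.card ι) (g : ι → ℝ) :
    ((Fintype.card ι).choose k : ℝ)⁻¹ * ∑ I ∈ powersetCard k univ, ∑ i ∈ Iᶜ, g i =
      ((Fintype.card ι - k) / Fintype.card ι : ℝ) * ∑ i, g i := by
  rcases (Fintype.card ι).eq_zero_or_pos with hempty | hpos
  · have : IsEmpty ι := Fintype.card_eq_zero_iff.1 hempty
    simp [eq_empty_of_isEmpty]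
  rw [sum_powersetCard_sum_compl, nsmul_eq_mul, ← mul_assoc]
  congr 1
  have hchoose := Nat.choose_mul_succ_eq (Fintype.card ι - 1) k
  rw [Nat.sub_add_cancel hpos] at hchoose
  have hchoose_pos : (0 : ℝ) < ((Fintype.card ι).choose k : ℝ) := by
    exact_mod_cast Nat.choose_pos hk
  field_simp
  rw [← Nat.cast_sub hk]
  exact_mod_cast hchoose

theorem sum_norm_sub_ite_sq_le {ι F E : Type*} [Fintype ι] [DecidableEq ι]
    [SeminormedAddCommGroup E] (G : ι → F → E) (z x : F) (y : ι → F) {I : Finset ι}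
    (hI : 0 < #I) :
    ∑ i, ‖G i z - G i (if i ∈ I then x else y i)‖ ^ 2 ≤
      (2 * Fintype.card ι - #I) / #I * ∑ i, ‖G i z - G i x‖ ^ 2 +
        (2 * Fintype.card ι - #I) / (2 * (Fintype.card ι - #I)) *
          ∑ i ∈ Iᶜ, ‖G i x - G i (y i)‖ ^ 2 := by
  set n : ℝ := (Fintype.card ι : ℝ)
  set b : ℝ := (#I : ℝ)
  have hb : 0 < b := Nat.cast_pos.2 hI
  have hbn : b ≤ n := Nat.cast_le.2 (card_le_univ I)
  have hα : 1 ≤ (2 * n - b) / b := by rw [le_div_iff₀ hb]; linarith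
  have hyoung : ∀ i ∈ Iᶜ, ‖G i z - G i (y i)‖ ^ 2 ≤
      (2 * n - b) / b * ‖G i z - G i x‖ ^ 2 +
        (2 * n - b) / (2 * (n - b)) * ‖G i x - G i (y i)‖ ^ 2 := by
    intro i hi
    have hbn : b < n := Nat.cast_lt.2 (card_lt_univ_of_notMem (mem_compl.1 hi))
    rw [← sub_add_sub_cancel (G i z) (G i x)]
    apply norm_add_sq_le_of_inv_add_inv_le_one
    · linarith
    · apply div_pos <;> linarith
    · rw [inv_div, inv_div, ← add_div, div_le_one] <;> linarith
  calc ∑ i, ‖G i z - G i (if i ∈ I then x else y i)‖ ^ 2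
      = ∑ i ∈ I, ‖G i z - G i x‖ ^ 2 + ∑ i ∈ Iᶜ, ‖G i z - G i (y i)‖ ^ 2 := by
        rw [← sum_add_sum_compl I]
        congr 1 <;> refine sum_congr rfl fun i hi => ?_
        · rw [if_pos hi]
        · rw [if_neg (mem_compl.1 hi)]
    _ ≤ ∑ i ∈ I, (2 * n - b) / b * ‖G i z - G i x‖ ^ 2 + ∑ i ∈ Iᶜ, ((2 * n - b) / b *
          ‖G i z - G i x‖ ^ 2 + (2 * n - b) / (2 * (n - b)) * ‖G i x - G i (y i)‖ ^ 2) := by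
        exact add_le_add (sum_le_sum fun i _ => le_mul_of_one_le_left (by positivity) hα)
          (sum_le_sum hyoung)
    _ = _ := by
        rw [sum_add_distrib, ← add_assoc, sum_add_sum_compl, ← mul_sum, ← mul_sum]

theorem two_mul_sub_div_mul_sub_div_le {n b : ℝ} (hb : 0 < b) (hbn : b ≤ n) :
    (2 * n - b) / (2 * (n - b)) * ((n - b) / n) ≤ 1 - b / (2 * n) := by
  obtain rfl | hlt := hbn.eq_or_lt
  · simp only [sub_self, mul_zero, div_zero, zero_mul, sub_nonneg]
    rw [div_le_one] <;> linarith
  · apply le_of_eq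
    have hn : n ≠ 0 := by linarith
    have hnb : n - b ≠ 0 := by linarith
    field_simp

theorem inv_mul_sum_norm_sub_ite_sq_le {ι F E : Type*} [Fintype ι] [DecidableEq ι]
    [SeminormedAddCommGroup F] [SeminormedAddCommGroup E] (G : ι → F → E) (z x : F) (y : ι → F)
    {I : Finset ι} (hI : 0 < #I) {L : ℝ}
    (hsmooth : 1 / (Fintype.card ι : ℝ) * ∑ i, ‖G i z - G i x‖ ^ 2 ≤ L ^ 2 * ‖z - x‖ ^ 2) :
    1 / ((#I : ℝ) * Fintype.card ι) * ∑ i, ‖G i z - G i (if i ∈ I then x else y i)‖ ^ 2 ≤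
      (2 * Fintype.card ι - #I) * L ^ 2 / (#I : ℝ) ^ 2 * ‖z - x‖ ^ 2 +
        1 / ((#I : ℝ) * Fintype.card ι) *
          ((2 * Fintype.card ι - #I) / (2 * (Fintype.card ι - #I))) *
            ∑ i ∈ Iᶜ, ‖G i x - G i (y i)‖ ^ 2 := by
  set n : ℝ := (Fintype.card ι : ℝ)
  set b : ℝ := (#I : ℝ)
  have hb : 0 < b := Nat.cast_pos.2 hI
  have hbn : b ≤ n := Nat.cast_le.2 (card_le_univ I)
  have hα : 0 ≤ (2 * n - b) / b / b := by apply div_nonneg (div_nonneg _ hb.le) hb.le; linarith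
  calc _ ≤ 1 / (b * n) * ((2 * n - b) / b * ∑ i, ‖G i z - G i x‖ ^ 2 +
          (2 * n - b) / (2 * (n - b)) * ∑ i ∈ Iᶜ, ‖G i x - G i (y i)‖ ^ 2) := by
        gcongr
        exact sum_norm_sub_ite_sq_le G z x y hI
    _ = (2 * n - b) / b / b * (1 / n * ∑ i, ‖G i z - G i x‖ ^ 2) +
          1 / (b * n) * ((2 * n - b) / (2 * (n - b))) * ∑ i ∈ Iᶜ, ‖G i x - G i (y i)‖ ^ 2 := by
        ring
    _ ≤ (2 * n - b) / b / b * (L ^ 2 * ‖z - x‖ ^ 2) +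
          1 / (b * n) * ((2 * n - b) / (2 * (n - b))) * ∑ i ∈ Iᶜ, ‖G i x - G i (y i)‖ ^ 2 := by
        gcongr
    _ = _ := by ring

theorem stmt_3_general (d n b : ℕ) (hb : 0 < b) (hbn : b ≤ n) (L : ℝ)
    (f : Fin n → EuclideanSpace ℝ (Fin d) → ℝ)
    (hsmooth : ∀ x y : EuclideanSpace ℝ (Fin d),
      (1 / (n : ℝ)) * ∑ i, ‖gradient (f i) x - gradient (f i) y‖ ^ 2 ≤
        L ^ 2 * ‖x - y‖ ^ 2)
    (x : EuclideanSpace ℝ (Fin d)) (y : Fin n → EuclideanSpace ℝ (Fin d))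
    (xp : Finset (Fin n) → EuclideanSpace ℝ (Fin d)) :
    (1 / (n.choose b : ℝ)) *
        ∑ I ∈ Finset.powersetCard b (Finset.univ : Finset (Fin n)),
          ((1 / ((b : ℝ) * (n : ℝ))) *
            ∑ i, ‖gradient (f i) (xp I) -
              gradient (f i) (if i ∈ I then x else y i)‖ ^ 2) ≤
      (1 - (b : ℝ) / (2 * (n : ℝ))) *
          ((1 / ((b : ℝ) * (n : ℝ))) *
            ∑ i, ‖gradient (f i) x - gradient (f i) (y i)‖ ^ 2) +
        ((2 * (n : ℝ) - (b : ℝ)) * L ^ 2 / (b : ℝ) ^ 2) *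
          ((1 / (n.choose b : ℝ)) *
            ∑ I ∈ Finset.powersetCard b (Finset.univ : Finset (Fin n)),
              ‖xp I - x‖ ^ 2) := by
  set c : ℝ := 1 / ((b : ℝ) * n)
  set K : ℝ := (2 * (n : ℝ) - b) * L ^ 2 / (b : ℝ) ^ 2
  set γ : ℝ := (2 * (n : ℝ) - b) / (2 * ((n : ℝ) - b))
  set g : Fin n → ℝ := fun i => ‖gradient (f i) x - gradient (f i) (y i)‖ ^ 2
  have hsubset : ∀ I ∈ powersetCard b (univ : Finset (Fin n)),
      c * ∑ i, ‖gradient (f i) (xp I) - gradient (f i) (if i ∈ I then x else y i)‖ ^ 2 ≤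
        K * ‖xp I - x‖ ^ 2 + c * γ * ∑ i ∈ Iᶜ, g i := by
    intro I hI
    have hcard := (mem_powersetCard.1 hI).2
    have hbatch := inv_mul_sum_norm_sub_ite_sq_le (fun i => gradient (f i)) (xp I) x y
      (hcard ▸ hb) (by simpa using hsmooth (xp I) x)
    rwa [hcard, Fintype.card_fin] at hbatch
  have havg := inv_choose_mul_sum_powersetCard_sum_compl (hbn.trans_eq (Fintype.card_fin n).symm) g
  rw [Fintype.card_fin] at havg
  calc _ ≤ 1 / (n.choose b : ℝ) *
        ∑ I ∈ powersetCard b univ, (K * ‖xp I - x‖ ^ 2 + c * γ * ∑ i ∈ Iᶜ, g i) := by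
        gcongr with I hI
        exact hsubset I hI
    _ = c * (γ * (((n : ℝ) - b) / n)) * ∑ i, g i +
        K * (1 / (n.choose b : ℝ) * ∑ I ∈ powersetCard b univ, ‖xp I - x‖ ^ 2) := by
        rw [sum_add_distrib, ← mul_sum, ← mul_sum]
        linear_combination c * γ * havg
    _ ≤ _ := by
        rw [mul_comm c, mul_assoc]
        gcongr
        exact two_mul_sub_div_mul_sub_div_le (Nat.cast_pos.2 hb) (Nat.cast_le.2 hbn)

/-- One-step recursion for the quantity ϒ of MM-SAGA.
`f₁, …, fₙ` satisfy the average smoothness condition with constant `L > 0`; `I` ranges uniformly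
over all `b`-element subsets of `{1, …, n}` (expectation = average over the `n.choose b` subsets);
`yᵢ^I = x` if `i ∈ I`, else `yᵢ`. Then for any assignment `I ↦ x⁺(I)`:
`E[(1/(bn)) ∑ᵢ ‖∇fᵢ(x⁺(I)) − ∇fᵢ(yᵢ^I)‖²]
  ≤ (1 − b/(2n))·(1/(bn)) ∑ᵢ ‖∇fᵢ(x) − ∇fᵢ(yᵢ)‖² + ((2n − b)L²/b²)·E‖x⁺(I) − x‖²`. -/
theorem stmt_3 (d n b : ℕ) (hn : 0 < n) (hb : 0 < b) (hbn : b ≤ n) (L : ℝ) (hL : 0 < L)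
    (f : Fin n → EuclideanSpace ℝ (Fin d) → ℝ)
    (hf : ∀ i, Differentiable ℝ (f i))
    (hsmooth : ∀ x y : EuclideanSpace ℝ (Fin d),
      (1 / (n : ℝ)) * ∑ i, ‖gradient (f i) x - gradient (f i) y‖ ^ 2 ≤
        L ^ 2 * ‖x - y‖ ^ 2)
    (x : EuclideanSpace ℝ (Fin d)) (y : Fin n → EuclideanSpace ℝ (Fin d))
    (xp : Finset (Fin n) → EuclideanSpace ℝ (Fin d)) :
    (1 / (n.choose b : ℝ)) *
        ∑ I ∈ Finset.powersetCard b (Finset.univ : Finset (Fin n)),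
          ((1 / ((b : ℝ) * (n : ℝ))) *
            ∑ i, ‖gradient (f i) (xp I) -
              gradient (f i) (if i ∈ I then x else y i)‖ ^ 2) ≤
      (1 - (b : ℝ) / (2 * (n : ℝ))) *
          ((1 / ((b : ℝ) * (n : ℝ))) *
            ∑ i, ‖gradient (f i) x - gradient (f i) (y i)‖ ^ 2) +
        ((2 * (n : ℝ) - (b : ℝ)) * L ^ 2 / (b : ℝ) ^ 2) *
          ((1 / (n.choose b : ℝ)) *
            ∑ I ∈ Finset.powersetCard b (Finset.univ : Finset (Fin n)),
              ‖xp I - x‖ ^ 2) :=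
  stmt_3_general d n b hb hbn L f hsmooth x y xp
end

section
/- Let f₁,…,fₙ : ℝ^d → ℝ be differentiable and satisfy the average smoothness condition with constant L > 0. Let m ≥ 1 be an integer, let (Ω, P) be a finite probability space and B ⊆ Ω an event with P(B) = 1/m. Fix x, x̃_old ∈ ℝ^d, let x̃(ω) = x for ω ∈ B and x̃(ω) = x̃_old otherwise, and let x⁺ : Ω → ℝ^d be an arbitrary random vector. Then E[(1/(bn))∑_{i=1}^n ‖∇fᵢ(x⁺(ω)) − ∇fᵢ(x̃(ω))‖²] ≤ (1 − 1/(2m))·(1/(bn))∑_{i=1}^n ‖∇fᵢ(x) − ∇fᵢ(x̃_old)‖² + ((2m − 1)L²/b)·E‖x⁺(ω) − x‖², for any integer b ≥ 1. -/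
lemma sq_split_aux (u v β : ℝ) (hu : 0 ≤ u) (hv : 0 ≤ v) (hβ : 0 < β) :
    (u + v) ^ 2 ≤ (1 + β) * u ^ 2 + (1 + 1/β) * v ^ 2 := by
  have h : (1/β) * β = 1 := one_div_mul_cancel hβ.ne'
  nlinarith [sq_nonneg (β * u - v), mul_pos hβ hβ, mul_nonneg hu hv, hβ.le]

/-- One-step recursion for the quantity ϒ of MM-SVRG.
`f₁, …, fₙ` satisfy the average smoothness condition with constant `L > 0`; `(Ω, P)` is a finite
probability space, `B ⊆ Ω` an event with `P(B) = 1/m`; the pivot `x̃(ω)` equals `x` on `B` and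
`x̃_old` otherwise; `x⁺ : Ω → ℝ^d` is an arbitrary random vector. Then
`E[(1/(bn)) ∑ᵢ ‖∇fᵢ(x⁺(ω)) − ∇fᵢ(x̃(ω))‖²]
  ≤ (1 − 1/(2m))·(1/(bn)) ∑ᵢ ‖∇fᵢ(x) − ∇fᵢ(x̃_old)‖² + ((2m − 1)L²/b)·E‖x⁺(ω) − x‖²`. -/
theorem stmt_4 (d n b m : ℕ) (hn : 0 < n) (hb : 0 < b) (hm : 0 < m) (L : ℝ) (hL : 0 < L)
    (f : Fin n → EuclideanSpace ℝ (Fin d) → ℝ)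
    (hf : ∀ i, Differentiable ℝ (f i))
    (hsmooth : ∀ x y : EuclideanSpace ℝ (Fin d),
      (1 / (n : ℝ)) * ∑ i, ‖gradient (f i) x - gradient (f i) y‖ ^ 2 ≤
        L ^ 2 * ‖x - y‖ ^ 2)
    (Ω : Type*) [Fintype Ω] [DecidableEq Ω] (P : Ω → ℝ)
    (hP0 : ∀ ω, 0 ≤ P ω) (hP1 : ∑ ω, P ω = 1)
    (B : Finset Ω) (hB : ∑ ω ∈ B, P ω = 1 / (m : ℝ))
    (x xtold : EuclideanSpace ℝ (Fin d))
    (xp : Ω → EuclideanSpace ℝ (Fin d)) :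
    ∑ ω, P ω * ((1 / ((b : ℝ) * (n : ℝ))) *
        ∑ i, ‖gradient (f i) (xp ω) -
          gradient (f i) (if ω ∈ B then x else xtold)‖ ^ 2) ≤
      (1 - 1 / (2 * (m : ℝ))) *
          ((1 / ((b : ℝ) * (n : ℝ))) *
            ∑ i, ‖gradient (f i) x - gradient (f i) xtold‖ ^ 2) +
        ((2 * (m : ℝ) - 1) * L ^ 2 / (b : ℝ)) * ∑ ω, P ω * ‖xp ω - x‖ ^ 2 := by
  have nR : (0:ℝ) < n := by exact_mod_cast hn
  have bR : (0:ℝ) < b := by exact_mod_cast hb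
  have mR : (1:ℝ) ≤ m := by exact_mod_cast hm
  set g : Fin n → EuclideanSpace ℝ (Fin d) → EuclideanSpace ℝ (Fin d) :=
    fun i => gradient (f i) with hg
  set G : ℝ := (1 / ((b:ℝ) * n)) * ∑ i, ‖g i x - g i xtold‖ ^ 2 with hGdef
  have hGnn : 0 ≤ G := by
    apply mul_nonneg (by positivity)
    exact Finset.sum_nonneg fun i _ => by positivity
  set K : ℝ := (2 * (m:ℝ) - 1) * L ^ 2 / b with hKdef
  have hK1 : (1:ℝ) ≤ 2 * (m:ℝ) - 1 := by linarith
  -- scaled smoothness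
  have hS : ∀ y z : EuclideanSpace ℝ (Fin d),
      (1 / ((b:ℝ) * n)) * ∑ i, ‖g i y - g i z‖ ^ 2 ≤ L ^ 2 / b * ‖y - z‖ ^ 2 := by
    intro y z
    have h1 := hsmooth y z
    have h2 : (1 / ((b:ℝ) * n)) * ∑ i, ‖g i y - g i z‖ ^ 2
        = (1/(b:ℝ)) * ((1 / (n:ℝ)) * ∑ i, ‖g i y - g i z‖ ^ 2) := by ring
    rw [h2]
    calc (1/(b:ℝ)) * ((1 / (n:ℝ)) * ∑ i, ‖g i y - g i z‖ ^ 2)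
        ≤ (1/(b:ℝ)) * (L ^ 2 * ‖y - z‖ ^ 2) :=
          mul_le_mul_of_nonneg_left h1 (by positivity)
      _ = L ^ 2 / b * ‖y - z‖ ^ 2 := by ring
  -- coefficient function
  set c : Ω → ℝ := fun ω => if ω ∈ B then 0 else (2 * (m:ℝ) - 1) / (2 * (m:ℝ) - 2) with hc
  -- complement mass
  have hcompl : ∑ ω ∈ Bᶜ, P ω = 1 - 1 / (m:ℝ) := by
    have := Finset.sum_add_sum_compl B P
    rw [hB, hP1] at this
    linarith
  -- per-ω bound
  have hpt : ∀ ω, P ω * ((1 / ((b:ℝ) * n)) *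
      ∑ i, ‖g i (xp ω) - g i (if ω ∈ B then x else xtold)‖ ^ 2)
      ≤ P ω * (c ω * G + K * ‖xp ω - x‖ ^ 2) := by
    intro ω
    by_cases hω : ω ∈ B
    · simp only [hc, hω, if_true, zero_mul, zero_add]
      apply mul_le_mul_of_nonneg_left _ (hP0 ω)
      calc (1 / ((b:ℝ) * n)) * ∑ i, ‖g i (xp ω) - g i x‖ ^ 2
          ≤ L ^ 2 / b * ‖xp ω - x‖ ^ 2 := hS _ _
        _ ≤ K * ‖xp ω - x‖ ^ 2 := by
            apply mul_le_mul_of_nonneg_right _ (by positivity)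
            rw [hKdef]
            rw [div_le_div_iff₀ bR bR]
            nlinarith [mul_nonneg (sq_nonneg L) bR.le]
    · rcases eq_or_lt_of_le mR with hm1 | hm2
      · -- m = 1 : P ω = 0
        have hPz : P ω = 0 := by
          have hz : ∑ ω ∈ Bᶜ, P ω = 0 := by rw [hcompl, ← hm1]; norm_num
          have := (Finset.sum_eq_zero_iff_of_nonneg (fun i _ => hP0 i)).1 hz ω
            (Finset.mem_compl.2 hω)
          exact this
        simp [hPz]
      · -- m ≥ 2
        have hβ : (0:ℝ) < 2 * (m:ℝ) - 2 := by linarith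
        apply mul_le_mul_of_nonneg_left _ (hP0 ω)
        simp only [hc, hω, if_false]
        have hsum : ∑ i, ‖g i (xp ω) - g i xtold‖ ^ 2
            ≤ ∑ i, ((2 * (m:ℝ) - 1) * ‖g i (xp ω) - g i x‖ ^ 2
              + (2 * (m:ℝ) - 1) / (2 * (m:ℝ) - 2) * ‖g i x - g i xtold‖ ^ 2) := by
          apply Finset.sum_le_sum
          intro i _
          have htri : ‖g i (xp ω) - g i xtold‖ ≤ ‖g i (xp ω) - g i x‖ + ‖g i x - g i xtold‖ :=
            norm_sub_le_norm_sub_add_norm_sub _ _ _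
          have hsq : ‖g i (xp ω) - g i xtold‖ ^ 2
              ≤ (‖g i (xp ω) - g i x‖ + ‖g i x - g i xtold‖) ^ 2 := by
            apply pow_le_pow_left₀ (norm_nonneg _) htri
          have := sq_split_aux ‖g i (xp ω) - g i x‖ ‖g i x - g i xtold‖ (2 * (m:ℝ) - 2)
            (norm_nonneg _) (norm_nonneg _) hβ
          have heq1 : (1:ℝ) + (2 * (m:ℝ) - 2) = 2 * (m:ℝ) - 1 := by ring
          have heq2 : (1:ℝ) + 1 / (2 * (m:ℝ) - 2) = (2 * (m:ℝ) - 1) / (2 * (m:ℝ) - 2) := by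
            field_simp
            ring
          rw [heq1, heq2] at this
          linarith
        calc (1 / ((b:ℝ) * n)) * ∑ i, ‖g i (xp ω) - g i xtold‖ ^ 2
            ≤ (1 / ((b:ℝ) * n)) * ∑ i, ((2 * (m:ℝ) - 1) * ‖g i (xp ω) - g i x‖ ^ 2
              + (2 * (m:ℝ) - 1) / (2 * (m:ℝ) - 2) * ‖g i x - g i xtold‖ ^ 2) :=
              mul_le_mul_of_nonneg_left hsum (by positivity)
          _ = (2 * (m:ℝ) - 1) * ((1 / ((b:ℝ) * n)) * ∑ i, ‖g i (xp ω) - g i x‖ ^ 2)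
              + (2 * (m:ℝ) - 1) / (2 * (m:ℝ) - 2) * G := by
              rw [Finset.sum_add_distrib, ← Finset.mul_sum, ← Finset.mul_sum, hGdef]; ring
          _ ≤ (2 * (m:ℝ) - 1) * (L ^ 2 / b * ‖xp ω - x‖ ^ 2)
              + (2 * (m:ℝ) - 1) / (2 * (m:ℝ) - 2) * G := by
              have := hS (xp ω) x
              nlinarith [hS (xp ω) x]
          _ = (2 * (m:ℝ) - 1) / (2 * (m:ℝ) - 2) * G + K * ‖xp ω - x‖ ^ 2 := by
              rw [hKdef]; ring
  -- coefficient sum bound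
  have hcsum : ∑ ω, P ω * c ω ≤ 1 - 1 / (2 * (m:ℝ)) := by
    have hsplit : ∑ ω, P ω * c ω = ∑ ω ∈ Bᶜ, P ω * ((2 * (m:ℝ) - 1) / (2 * (m:ℝ) - 2)) := by
      rw [← Finset.sum_add_sum_compl B (fun ω => P ω * c ω)]
      have h1 : ∑ ω ∈ B, P ω * c ω = 0 := by
        apply Finset.sum_eq_zero; intro ω hω; simp [hc, hω]
      rw [h1, zero_add]
      apply Finset.sum_congr rfl
      intro ω hω
      simp [hc, Finset.mem_compl.1 hω]
    rw [hsplit, ← Finset.sum_mul, hcompl]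
    rcases eq_or_lt_of_le mR with hm1 | hm2
    · rw [← hm1]; norm_num
    · have hβ : (0:ℝ) < 2 * (m:ℝ) - 2 := by linarith
      have hmpos : (0:ℝ) < m := by linarith
      have : (1 - 1 / (m:ℝ)) * ((2 * (m:ℝ) - 1) / (2 * (m:ℝ) - 2)) = 1 - 1 / (2 * (m:ℝ)) := by
        field_simp
      rw [this]
  -- assemble
  calc ∑ ω, P ω * ((1 / ((b:ℝ) * n)) *
        ∑ i, ‖g i (xp ω) - g i (if ω ∈ B then x else xtold)‖ ^ 2)
      ≤ ∑ ω, P ω * (c ω * G + K * ‖xp ω - x‖ ^ 2) := Finset.sum_le_sum fun ω _ => hpt ω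
    _ = (∑ ω, P ω * c ω) * G + K * ∑ ω, P ω * ‖xp ω - x‖ ^ 2 := by
        rw [Finset.sum_mul, Finset.mul_sum]
        rw [← Finset.sum_add_distrib]
        apply Finset.sum_congr rfl
        intro ω _
        ring
    _ ≤ (1 - 1 / (2 * (m:ℝ))) * G + K * ∑ ω, P ω * ‖xp ω - x‖ ^ 2 := by
        have : (∑ ω, P ω * c ω) * G ≤ (1 - 1 / (2 * (m:ℝ))) * G :=
          mul_le_mul_of_nonneg_right hcsum hGnn
        linarith
end

section
/- Let f₁,…,fₙ : ℝ^d → ℝ be differentiable and f = (1/n)∑_{i=1}^n fᵢ. Fix x, y ∈ ℝ^d and an arbitrary vector v ∈ ℝ^d, and let I = (i₁,…,i_b) be a random batch of size b from {1,…,n}. Then E‖(1/b)∑_{j=1}^b (∇f_{i_j}(x) − ∇f_{i_j}(y)) + v − ∇f(x)‖² = (1/(bn))∑_{i=1}^n ‖∇fᵢ(x) − ∇fᵢ(y)‖² − (1/b)‖∇f(x) − ∇f(y)‖² + ‖v − ∇f(y)‖², where the expectation is over the random batch. (This is the single-batch error identity for the SARAH recursive gradient estimator with previous estimate v at the previous iterate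 y.) -/
/-!
Write `gᵢ = ∇fᵢ(x) - ∇fᵢ(y)`; by linearity of the gradient its mean is `G = ∇f(x) - ∇f(y)`.
With `hᵢ = gᵢ - G` the estimator error is `(1/b) ∑ⱼ h_{iⱼ} + (v - ∇f(y))`, a mean-zero random
vector plus a constant, so the constant contributes exactly `‖v - ∇f(y)‖²`. The batch entries are
independent and `h` has mean zero, so the cross terms of `‖∑ⱼ h_{iⱼ}‖²` average to zero and
`E‖∑ⱼ h_{iⱼ}‖² = (b/n) ∑ᵢ ‖hᵢ‖² = (b/n) ∑ᵢ ‖gᵢ‖² - b ‖G‖²`.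
-/

open Finset
open scoped RealInnerProductSpace

section Gradient

variable {E : Type*} [NormedAddCommGroup E] [InnerProductSpace ℝ E] [CompleteSpace E] {x : E}

theorem HasGradientAt.sum {ι : Type*} {s : Finset ι} {f : ι → E → ℝ} {f' : ι → E}
    (h : ∀ i ∈ s, HasGradientAt (f i) (f' i) x) :
    HasGradientAt (fun w => ∑ i ∈ s, f i w) (∑ i ∈ s, f' i) x := by
  rw [hasGradientAt_iff_hasFDerivAt, map_sum]
  exact HasFDerivAt.fun_sum fun i hi => (h i hi).hasFDerivAt

theorem HasGradientAt.const_mul {f : E → ℝ} {f' : E} (h : HasGradientAt f f' x) (c : ℝ) :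
    HasGradientAt (fun w => c * f w) (c • f') x := by
  rw [hasGradientAt_iff_hasFDerivAt, map_smulₛₗ]
  exact h.hasFDerivAt.const_mul c

end Gradient

section Batch

variable {ι M E : Type*} [Fintype ι] [AddCommMonoid M]
  [NormedAddCommGroup E] [InnerProductSpace ℝ E]

def batchSum {b : ℕ} (h : ι → M) (I : Fin b → ι) : M := ∑ j, h (I j)

omit [Fintype ι] in
lemma batchSum_cons {b : ℕ} (h : ι → M) (a : ι) (J : Fin b → ι) :
    batchSum h (Fin.cons a J : Fin (b + 1) → ι) = h a + batchSum h J := by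
  simp [batchSum, Fin.sum_univ_succ]

lemma Fintype.sum_fin_succ_pi {b : ℕ} (g : (Fin (b + 1) → ι) → M) :
    ∑ I, g I = ∑ a, ∑ J : Fin b → ι, g (Fin.cons a J) := by
  rw [← Fintype.sum_prod_type']
  exact (Fintype.sum_equiv (Fin.consEquiv fun _ => ι) _ _ fun _ => rfl).symm

lemma sum_batchSum_eq_zero {h : ι → M} (hh : ∑ i, h i = 0) (b : ℕ) :
    ∑ I : Fin b → ι, batchSum h I = 0 := by
  induction b with
  | zero => simp [batchSum]
  | succ b ih =>
    simp only [Fintype.sum_fin_succ_pi, batchSum_cons, sum_add_distrib, sum_const, ih,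
      ← smul_sum, hh, smul_zero, add_zero]

lemma sum_norm_batchSum_sq {h : ι → E} (hh : ∑ i, h i = 0) (b : ℕ) :
    (Fintype.card ι : ℝ) * ∑ I : Fin b → ι, ‖batchSum h I‖ ^ 2
      = b * Fintype.card ι ^ b * ∑ i, ‖h i‖ ^ 2 := by
  induction b with
  | zero => simp [batchSum]
  | succ b ih =>
    have hcross : ∀ a, ∑ J : Fin b → ι, ⟪h a, batchSum h J⟫ = 0 := fun a => by
      rw [← inner_sum, sum_batchSum_eq_zero hh, inner_zero_right]
    simp only [Fintype.sum_fin_succ_pi, batchSum_cons, norm_add_sq_real, sum_add_distrib,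
      ← mul_sum, hcross, sum_const, card_univ, Fintype.card_fun, Fintype.card_fin, nsmul_eq_mul]
    push_cast
    linear_combination (Fintype.card ι : ℝ) * ih

lemma sum_norm_add_sq_of_sum_eq_zero_s5 {κ : Type*} (s : Finset κ) {X : κ → E}
    (hX : ∑ k ∈ s, X k = 0) (c : E) :
    ∑ k ∈ s, ‖X k + c‖ ^ 2 = ∑ k ∈ s, ‖X k‖ ^ 2 + #s * ‖c‖ ^ 2 := by
  simp only [norm_add_sq_real, sum_add_distrib, ← mul_sum, ← sum_inner, hX, inner_zero_left,
    mul_zero, add_zero, sum_const, nsmul_eq_mul]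

variable [Nonempty ι]

lemma one_div_card_pow_mul_sum_norm_batchSum_sub_add_sq {b : ℕ} (hb : b ≠ 0)
    {g : ι → E} {G : E} (hG : ∑ i, g i = (Fintype.card ι : ℝ) • G) (c : E) :
    (1 / (Fintype.card ι : ℝ) ^ b) * ∑ I : Fin b → ι, ‖(1 / (b : ℝ)) • batchSum g I - G + c‖ ^ 2
      = (1 / ((b : ℝ) * Fintype.card ι)) * ∑ i, ‖g i‖ ^ 2 - (1 / (b : ℝ)) * ‖G‖ ^ 2
        + ‖c‖ ^ 2 := by
  have hN : (Fintype.card ι : ℝ) ≠ 0 := by positivity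
  have hb' : (b : ℝ) ≠ 0 := by positivity
  set h := fun i => g i - G
  have hh : ∑ i, h i = 0 := by
    simp only [h, sum_sub_distrib, hG, sum_const, card_univ, Nat.cast_smul_eq_nsmul, sub_self]
  have hcentre : ∀ I : Fin b → ι,
      (1 / (b : ℝ)) • batchSum g I - G = (1 / (b : ℝ)) • batchSum h I := fun I => by
    simp only [h, batchSum, sum_sub_distrib, sum_const, card_univ, Fintype.card_fin,
        ← Nat.cast_smul_eq_nsmul ℝ, smul_sub, smul_smul, one_div_mul_cancel hb', one_smul]
  have hmean : ∑ I : Fin b → ι, (1 / (b : ℝ)) • batchSum h I = 0 := by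
    rw [← smul_sum, sum_batchSum_eq_zero hh, smul_zero]
  have hvar : ∑ i, ‖g i‖ ^ 2 = ∑ i, ‖h i‖ ^ 2 + Fintype.card ι * ‖G‖ ^ 2 := by
    simpa [h] using sum_norm_add_sq_of_sum_eq_zero_s5 univ hh G
  have hbatch := sum_norm_batchSum_sq hh b
  simp only [hcentre]
  rw [sum_norm_add_sq_of_sum_eq_zero_s5 _ hmean, hvar]
  simp only [norm_smul, mul_pow, ← mul_sum, card_univ, Fintype.card_fun, Fintype.card_fin,
    norm_div, norm_one, RCLike.norm_natCast, Nat.cast_pow]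
  field_simp
  linear_combination hbatch

end Batch

/-- Single-batch error identity for the SARAH recursive gradient estimator.
`f = (1/n) ∑ᵢ fᵢ`, `v ∈ ℝ^d` arbitrary (the previous estimate at the previous iterate `y`), and
`I = (i₁, …, i_b)` a batch of indices drawn independently and uniformly from `{1, …, n}`
(expectation = average over all `n^b` tuples). Then
`E ‖(1/b) ∑ⱼ (∇f_{iⱼ}(x) − ∇f_{iⱼ}(y)) + v − ∇f(x)‖²
  = (1/(bn)) ∑ᵢ ‖∇fᵢ(x) − ∇fᵢ(y)‖² − (1/b) ‖∇f(x) − ∇f(y)‖² + ‖v − ∇f(y)‖²`. -/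
theorem stmt_5 (d n b : ℕ) (hn : 0 < n) (hb : 0 < b)
    (f : Fin n → EuclideanSpace ℝ (Fin d) → ℝ)
    (hf : ∀ i, Differentiable ℝ (f i))
    (F : EuclideanSpace ℝ (Fin d) → ℝ)
    (hF : F = fun w => (1 / (n : ℝ)) * ∑ i, f i w)
    (x y v : EuclideanSpace ℝ (Fin d)) :
    (1 / (n : ℝ) ^ b) *
        ∑ I : Fin b → Fin n,
          ‖(1 / (b : ℝ)) • (∑ j, (gradient (f (I j)) x - gradient (f (I j)) y)) + v -
            gradient F x‖ ^ 2 =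
      (1 / ((b : ℝ) * (n : ℝ))) * ∑ i, ‖gradient (f i) x - gradient (f i) y‖ ^ 2 -
        (1 / (b : ℝ)) * ‖gradient F x - gradient F y‖ ^ 2 + ‖v - gradient F y‖ ^ 2 := by
  have hgradF : ∀ w, gradient F w = (1 / (n : ℝ)) • ∑ i, gradient (f i) w := fun w => by
    subst hF
    exact ((HasGradientAt.sum fun i _ => (hf i w).hasGradientAt).const_mul _).gradient
  have hG : ∑ i, (gradient (f i) x - gradient (f i) y)
      = (Fintype.card (Fin n) : ℝ) • (gradient F x - gradient F y) := by
    rw [hgradF, hgradF, ← smul_sub, smul_smul, Fintype.card_fin,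
      mul_one_div_cancel (by positivity), one_smul, sum_sub_distrib]
  have herror : ∀ I : Fin b → Fin n,
      (1 / (b : ℝ)) • (∑ j, (gradient (f (I j)) x - gradient (f (I j)) y)) + v - gradient F x
        = (1 / (b : ℝ)) • batchSum (fun i => gradient (f i) x - gradient (f i) y) I
          - (gradient F x - gradient F y) + (v - gradient F y) := fun I => by
    simp only [batchSum]
    abel
  have : Nonempty (Fin n) := ⟨⟨0, hn⟩⟩
  simp only [herror]
  simpa only [Fintype.card_fin] using
    one_div_card_pow_mul_sum_norm_batchSum_sub_add_sq hb.ne' hG (v - gradient F y)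
end

section
/- Let f₁,…,fₙ : ℝ^d → ℝ be differentiable, f = (1/n)∑_{i=1}^n fᵢ, and suppose the average smoothness condition with constant L > 0 holds. Fix x, y ∈ ℝ^d, a vector v ∈ ℝ^d (the previous SARAH estimate at y), and a positive integer m. For a random batch I = (i₁,…,i_b), let g̃(I) = (1/b)∑_{j=1}^b (∇f_{i_j}(x) − ∇f_{i_j}(y)) + v. Then the loop-less SARAH estimator error satisfies (1/m)·‖∇f(x) − ∇f(x)‖² + (1 − 1/m)·E_I‖g̃(I) − ∇f(x)‖² ≤ (1 − 1/m)·[‖v − ∇f(y)‖² + (L²/b)‖x − y‖²]; in particular it is at most ‖v − ∇f(y)‖² + (L²/b)‖x − y‖². -/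
open Finset RealInnerProductSpace

lemma aux_sum_eval {n : ℕ} (hn : 0 < n) {ι : Type*} [Fintype ι] [DecidableEq ι]
    (j : ι) (ψ : Fin n → ℝ) :
    ∑ I : ι → Fin n, ψ (I j) = (n : ℝ) ^ Fintype.card ι / n * ∑ p, ψ p := by
  have hcard : 0 < Fintype.card ι := Fintype.card_pos_iff.mpr ⟨j⟩
  rw [Fintype.sum_equiv (Equiv.funSplitAt j (Fin n)) (fun I => ψ (I j))
    (fun q => ψ q.1) (fun I => rfl)]
  rw [Fintype.sum_prod_type]
  simp only [Finset.sum_const, Finset.card_univ, nsmul_eq_mul, Fintype.card_fun]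
  rw [← Finset.mul_sum]
  congr 1
  have h1 : Fintype.card {j' : ι // j' ≠ j} = Fintype.card ι - 1 := by
    simp [Fintype.card_subtype_compl]
  rw [h1]
  simp only [Fintype.card_fin]
  push_cast
  rw [eq_div_iff (by positivity), ← pow_succ, Nat.sub_add_cancel hcard]

lemma aux_sum_eval2 {n : ℕ} (hn : 0 < n) {ι : Type*} [Fintype ι] [DecidableEq ι]
    {j k : ι} (hkj : k ≠ j) (φ : Fin n → Fin n → ℝ) :
    ∑ I : ι → Fin n, φ (I j) (I k) =
      (n : ℝ) ^ Fintype.card ι / n ^ 2 * ∑ p, ∑ q, φ p q := by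
  have hcard : 0 < Fintype.card ι := Fintype.card_pos_iff.mpr ⟨j⟩
  rw [Fintype.sum_equiv (Equiv.funSplitAt j (Fin n)) (fun I => φ (I j) (I k))
    (fun q => φ q.1 (q.2 ⟨k, hkj⟩)) (fun I => rfl)]
  rw [Fintype.sum_prod_type]
  have hin : ∀ p : Fin n, ∑ r : {j' : ι // j' ≠ j} → Fin n, φ p (r ⟨k, hkj⟩) =
      (n : ℝ) ^ Fintype.card {j' : ι // j' ≠ j} / n * ∑ q, φ p q := by
    intro p
    exact aux_sum_eval hn (⟨k, hkj⟩ : {j' : ι // j' ≠ j}) (φ p)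
  simp only [hin]
  rw [← Finset.mul_sum]
  congr 1
  have h1 : Fintype.card {j' : ι // j' ≠ j} = Fintype.card ι - 1 := by
    simp [Fintype.card_subtype_compl]
  rw [h1, div_eq_div_iff (by positivity) (by positivity)]
  rw [sq, ← mul_assoc, ← pow_succ, Nat.sub_add_cancel hcard]

lemma aux_grad {d n : ℕ} (f : Fin n → EuclideanSpace ℝ (Fin d) → ℝ)
    (hf : ∀ i, Differentiable ℝ (f i)) (z : EuclideanSpace ℝ (Fin d)) :
    gradient (fun w => (1 / (n : ℝ)) * ∑ i, f i w) z =
      (1 / (n : ℝ)) • ∑ i, gradient (f i) z := by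
  have hds : DifferentiableAt ℝ (fun w => ∑ i, f i w) z :=
    DifferentiableAt.fun_sum (fun i _ => (hf i).differentiableAt)
  have h1 : fderiv ℝ (fun w => (1 / (n : ℝ)) * ∑ i, f i w) z =
      (1 / (n : ℝ)) • ∑ i, fderiv ℝ (f i) z := by
    rw [fderiv_const_mul hds]
    congr 1
    exact fderiv_fun_sum (fun i _ => (hf i).differentiableAt)
  unfold gradient
  rw [h1, map_smul, map_sum]



/-- Loop-less SARAH estimator error bound.
`f = (1/n) ∑ᵢ fᵢ` satisfies the average smoothness condition with constant `L > 0`; `v` is the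
previous SARAH estimate at `y`; for a batch `I = (i₁, …, i_b)` of indices drawn independently and
uniformly from `{1, …, n}` (expectation `E_I` = average over all `n^b` tuples),
`g̃(I) = (1/b) ∑ⱼ (∇f_{iⱼ}(x) − ∇f_{iⱼ}(y)) + v`. Then
`(1/m)·‖∇f(x) − ∇f(x)‖² + (1 − 1/m)·E_I ‖g̃(I) − ∇f(x)‖²
  ≤ (1 − 1/m)·[‖v − ∇f(y)‖² + (L²/b)‖x − y‖²]`, and in particular the left-hand side is at most
`‖v − ∇f(y)‖² + (L²/b)‖x − y‖²`. -/
theorem stmt_6 (d n b m : ℕ) (hn : 0 < n) (hb : 0 < b) (hm : 0 < m) (L : ℝ) (hL : 0 < L)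
    (f : Fin n → EuclideanSpace ℝ (Fin d) → ℝ)
    (hf : ∀ i, Differentiable ℝ (f i))
    (F : EuclideanSpace ℝ (Fin d) → ℝ)
    (hF : F = fun w => (1 / (n : ℝ)) * ∑ i, f i w)
    (hsmooth : ∀ x y : EuclideanSpace ℝ (Fin d),
      (1 / (n : ℝ)) * ∑ i, ‖gradient (f i) x - gradient (f i) y‖ ^ 2 ≤
        L ^ 2 * ‖x - y‖ ^ 2)
    (x y v : EuclideanSpace ℝ (Fin d))
    (g : (Fin b → Fin n) → EuclideanSpace ℝ (Fin d))
    (hg : ∀ I : Fin b → Fin n,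
      g I = (1 / (b : ℝ)) • (∑ j, (gradient (f (I j)) x - gradient (f (I j)) y)) + v) :
    (1 / (m : ℝ)) * ‖gradient F x - gradient F x‖ ^ 2 +
        (1 - 1 / (m : ℝ)) *
          ((1 / (n : ℝ) ^ b) * ∑ I : Fin b → Fin n, ‖g I - gradient F x‖ ^ 2) ≤
      (1 - 1 / (m : ℝ)) *
        (‖v - gradient F y‖ ^ 2 + (L ^ 2 / (b : ℝ)) * ‖x - y‖ ^ 2) ∧
    (1 / (m : ℝ)) * ‖gradient F x - gradient F x‖ ^ 2 +
        (1 - 1 / (m : ℝ)) *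
          ((1 / (n : ℝ) ^ b) * ∑ I : Fin b → Fin n, ‖g I - gradient F x‖ ^ 2) ≤
      ‖v - gradient F y‖ ^ 2 + (L ^ 2 / (b : ℝ)) * ‖x - y‖ ^ 2 := by
  classical
  have hn' : (0:ℝ) < n := by exact_mod_cast hn
  have hb' : (0:ℝ) < b := by exact_mod_cast hb
  have hm' : (1:ℝ) ≤ m := by exact_mod_cast hm
  have hn0 : (n:ℝ) ≠ 0 := ne_of_gt hn'
  have hb0 : (b:ℝ) ≠ 0 := ne_of_gt hb'
  set a : Fin n → EuclideanSpace ℝ (Fin d) :=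
    fun i => gradient (f i) x - gradient (f i) y with ha
  set A : EuclideanSpace ℝ (Fin d) := ∑ i, a i with hA
  set c : EuclideanSpace ℝ (Fin d) := v - gradient F x with hc
  set Q : ℝ := ∑ p, ⟪a p, a p⟫ with hQdef
  have hgrad : ∀ z, gradient F z = (1/(n:ℝ)) • ∑ i, gradient (f i) z := by
    intro z; rw [hF]; exact aux_grad f hf z
  have hAB : gradient F x - gradient F y = (1/(n:ℝ)) • A := by
    rw [hgrad x, hgrad y, ← smul_sub, ← Finset.sum_sub_distrib, hA, ha]
  -- per-term expansion
  have hterm : ∀ I : Fin b → Fin n, ‖g I - gradient F x‖^2 =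
      (1/(b:ℝ))^2 * ∑ j, ∑ k, ⟪a (I j), a (I k)⟫
        + 2 * ((1/(b:ℝ)) * ∑ j, ⟪a (I j), c⟫) + ‖c‖^2 := by
    intro I
    have h0 : g I - gradient F x = (1/(b:ℝ)) • (∑ j, a (I j)) + c := by
      simp only [hg I, ha, hc, add_sub_assoc]
    have e1 : ‖(1/(b:ℝ)) • (∑ j, a (I j))‖^2
        = (1/(b:ℝ))^2 * ∑ j, ∑ k, ⟪a (I j), a (I k)⟫ := by
      rw [← real_inner_self_eq_norm_sq, real_inner_smul_left, real_inner_smul_right,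
        sum_inner]
      simp only [inner_sum]
      ring
    have e2 : ⟪(1/(b:ℝ)) • (∑ j, a (I j)), c⟫ = (1/(b:ℝ)) * ∑ j, ⟪a (I j), c⟫ := by
      rw [real_inner_smul_left, sum_inner]
    rw [h0, norm_add_sq_real, e1, e2]
  have hsum1 : ∑ I : Fin b → Fin n, ∑ j, ⟪a (I j), c⟫
      = (b:ℝ) * ((n:ℝ)^b / n * ⟪A, c⟫) := by
    rw [Finset.sum_comm]
    have hj : ∀ j : Fin b, ∑ I : Fin b → Fin n, ⟪a (I j), c⟫
        = (n:ℝ)^b / n * ⟪A, c⟫ := by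
      intro j
      have h := aux_sum_eval hn j (fun p => ⟪a p, c⟫)
      simp only [Fintype.card_fin] at h
      rw [h, hA, sum_inner]
    simp only [hj, Finset.sum_const, Finset.card_univ, Fintype.card_fin, nsmul_eq_mul]
  have hAA2 : ∑ p, ∑ q, ⟪a p, a q⟫ = ⟪A, A⟫ := by
    rw [hA, sum_inner]
    exact Finset.sum_congr rfl fun p _ => (inner_sum _ _ _).symm
  have hsum2 : ∑ I : Fin b → Fin n, ∑ j, ∑ k, ⟪a (I j), a (I k)⟫
      = (b:ℝ) * ((n:ℝ)^b / n * Q)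
        + (b:ℝ) * (((b:ℝ) - 1) * ((n:ℝ)^b / n^2 * ⟪A, A⟫)) := by
    rw [Finset.sum_comm]
    have hj : ∀ j : Fin b, ∑ I : Fin b → Fin n, ∑ k, ⟪a (I j), a (I k)⟫
        = (n:ℝ)^b / n * Q + ((b:ℝ) - 1) * ((n:ℝ)^b / n^2 * ⟪A, A⟫) := by
      intro j
      rw [Finset.sum_comm]
      have hkk : ∑ I : Fin b → Fin n, ⟪a (I j), a (I j)⟫ = (n:ℝ)^b / n * Q := by
        have h := aux_sum_eval hn j (fun p => ⟪a p, a p⟫)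
        simp only [Fintype.card_fin] at h
        rw [h, hQdef]
      have hkne : ∀ k ∈ Finset.univ.erase j,
          ∑ I : Fin b → Fin n, ⟪a (I j), a (I k)⟫
            = (n:ℝ)^b / n^2 * ⟪A, A⟫ := by
        intro k hk
        have h := aux_sum_eval2 hn (Finset.ne_of_mem_erase hk)
          (fun p q => ⟪a p, a q⟫)
        simp only [Fintype.card_fin] at h
        rw [h, hAA2]
      rw [← Finset.sum_erase_add _ _ (Finset.mem_univ j), hkk,
        Finset.sum_congr rfl hkne, Finset.sum_const,
        Finset.card_erase_of_mem (Finset.mem_univ j), Finset.card_univ,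
        Fintype.card_fin, nsmul_eq_mul]
      have hb1 : ((b - 1 : ℕ) : ℝ) = (b:ℝ) - 1 := by
        have : (1:ℕ) ≤ b := hb
        push_cast [Nat.cast_sub this]
        ring
      rw [hb1]
      ring
    simp only [hj, Finset.sum_const, Finset.card_univ, Fintype.card_fin, nsmul_eq_mul]
    ring
  have hE : (1/(n:ℝ)^b) * ∑ I : Fin b → Fin n, ‖g I - gradient F x‖^2
      = ‖c‖^2 + 2 * (⟪A, c⟫ / n) + (((b:ℝ) - 1)/b) * (⟪A, A⟫ / n^2)
        + (1/((b:ℝ)*n)) * Q := by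
    simp only [hterm]
    rw [Finset.sum_add_distrib, Finset.sum_add_distrib]
    simp only [← Finset.mul_sum]
    rw [hsum1, hsum2, Finset.sum_const, Finset.card_univ]
    simp only [Fintype.card_fun, Fintype.card_fin, nsmul_eq_mul]
    push_cast
    have hnb : (0:ℝ) < (n:ℝ)^b := by positivity
    field_simp
    ring
  have hQle : Q ≤ (n:ℝ) * (L^2 * ‖x - y‖^2) := by
    have h := hsmooth x y
    have hQ : Q = ∑ i, ‖a i‖^2 := by
      rw [hQdef]
      exact Finset.sum_congr rfl fun p _ => real_inner_self_eq_norm_sq _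
    have h2 : (1/(n:ℝ)) * Q ≤ L^2 * ‖x - y‖^2 := by rw [hQ]; exact h
    calc Q = (n:ℝ) * ((1/(n:ℝ)) * Q) := by field_simp
    _ ≤ (n:ℝ) * (L^2 * ‖x - y‖^2) := by
        exact mul_le_mul_of_nonneg_left h2 hn'.le
  have hAA : (0:ℝ) ≤ ⟪A, A⟫ := real_inner_self_nonneg
  have hRexp : ‖v - gradient F y‖^2
      = ‖c‖^2 + 2 * (⟪A, c⟫ / n) + ⟪A, A⟫ / n^2 := by
    have hv : v - gradient F y = c + (1/(n:ℝ)) • A := by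
      rw [hc, ← hAB, sub_add_sub_cancel]
    have h2 : ‖(1/(n:ℝ)) • A‖^2 = ⟪A, A⟫ / n^2 := by
      rw [← real_inner_self_eq_norm_sq, real_inner_smul_left, real_inner_smul_right]
      ring
    have h3 : ⟪c, (1/(n:ℝ)) • A⟫ = ⟪A, c⟫ / n := by
      rw [real_inner_smul_right, real_inner_comm]
      ring
    rw [hv, norm_add_sq_real, h2, h3]
  have hE_le : (1/(n:ℝ)^b) * ∑ I : Fin b → Fin n, ‖g I - gradient F x‖^2
      ≤ ‖v - gradient F y‖^2 + (L^2/(b:ℝ)) * ‖x - y‖^2 := by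
    rw [hE, hRexp]
    have h1 : (1/((b:ℝ)*n)) * Q ≤ (L^2/(b:ℝ)) * ‖x - y‖^2 := by
      calc (1/((b:ℝ)*n)) * Q ≤ (1/((b:ℝ)*n)) * ((n:ℝ) * (L^2 * ‖x - y‖^2)) :=
            mul_le_mul_of_nonneg_left hQle (by positivity)
      _ = (L^2/(b:ℝ)) * ‖x - y‖^2 := by field_simp
    have hs : (0:ℝ) ≤ ⟪A, A⟫ / n^2 := div_nonneg hAA (by positivity)
    have h2 : (((b:ℝ) - 1)/b) * (⟪A, A⟫ / n^2) ≤ ⟪A, A⟫ / n^2 := by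
      apply mul_le_of_le_one_left hs
      rw [div_le_one hb']
      linarith
    linarith
  have hzero : ‖gradient F x - gradient F x‖^2 = (0:ℝ) := by simp
  have hmfac : (0:ℝ) ≤ 1 - 1/(m:ℝ) := by
    have h1 : 1/(m:ℝ) ≤ 1 := by
      rw [div_le_one (by linarith)]
      exact hm'
    linarith
  have hR0 : (0:ℝ) ≤ ‖v - gradient F y‖^2 + (L^2/(b:ℝ)) * ‖x - y‖^2 := by positivity
  have hmain : (1 / (m : ℝ)) * ‖gradient F x - gradient F x‖ ^ 2 +
      (1 - 1 / (m : ℝ)) *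
        ((1 / (n : ℝ) ^ b) * ∑ I : Fin b → Fin n, ‖g I - gradient F x‖ ^ 2) ≤
      (1 - 1 / (m : ℝ)) *
        (‖v - gradient F y‖ ^ 2 + (L ^ 2 / (b : ℝ)) * ‖x - y‖ ^ 2) := by
    rw [hzero, mul_zero, zero_add]
    exact mul_le_mul_of_nonneg_left hE_le hmfac
  refine ⟨hmain, hmain.trans ?_⟩
  apply mul_le_of_le_one_left hR0
  have : (0:ℝ) ≤ 1/(m:ℝ) := by positivity
  linarith
end

section
/- Let f : ℝ^d → ℝ be differentiable with L-Lipschitz gradient (L ≥ 0), let r : ℝ^d → ℝ ∪ {+∞} be proper, and let u : ℝ^d × ℝ^d → ℝ ∪ {+∞} be a surrogate of r such that u(·, z) is convex. Set F = f + r, let μ > 0, fix z ∈ ℝ^d with r(z) < +∞ and g ∈ ℝ^d, and suppose x⁺ is a global minimizer over ℝ^d of the function x ↦ (μ/2)‖x − z‖² + ⟨g, x⟩ + u(x, z). Then F(x⁺) + ((2μ − L)/2)‖x⁺ − z‖² ≤ F(z) + ⟨∇f(z) − g, x⁺ − z⟩. -/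
open scoped RealInnerProductSpace
open Filter Topology

/-!
The objective `x ↦ (μ/2)‖x − z‖² + ⟪g, x⟫ + u(x, z)` is `μ`-strongly convex on the effective
domain of `u(·, z)`, so its minimizer `x⁺` has quadratic growth: the value at `z` exceeds the value
at `x⁺` by at least `(μ/2)‖z − x⁺‖²`. Since `u(z, z) = r(z)` and `u(x⁺, z) ≥ r(x⁺)`, this bounds
`r(x⁺) − r(z)`, and the descent lemma
`f(x⁺) ≤ f(z) + ⟪∇f(z), x⁺ − z⟫ + (L/2)‖x⁺ − z‖²` bounds `f(x⁺) − f(z)`.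
-/

section DescentLemma

variable {E : Type*} [NormedAddCommGroup E] [InnerProductSpace ℝ E] [CompleteSpace E]

theorem hasDerivAt_comp_add_smul_of_differentiable {f : E → ℝ} (hf : Differentiable ℝ f)
    (x v : E) (t : ℝ) :
    HasDerivAt (fun t : ℝ => f (x + t • v)) ⟪gradient f (x + t • v), v⟫ t := by
  have hline : HasDerivAt (fun t : ℝ => x + t • v) v t := by
    simpa using ((hasDerivAt_id t).smul_const v).const_add x
  have h := (hf (x + t • v)).hasGradientAt.hasFDerivAt.comp_hasDerivAt t hline
  rwa [InnerProductSpace.toDual_apply_apply] at h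

theorem le_add_inner_gradient_add_of_lipschitz_gradient {L : ℝ} {f : E → ℝ}
    (hf : Differentiable ℝ f)
    (hlip : ∀ x y : E, ‖gradient f x - gradient f y‖ ≤ L * ‖x - y‖) (x y : E) :
    f y ≤ f x + ⟪gradient f x, y - x⟫ + L / 2 * ‖y - x‖ ^ 2 := by
  set v := y - x
  set ψ : ℝ → ℝ := fun t => f (x + t • v) - t * ⟪gradient f x, v⟫ - L / 2 * t ^ 2 * ‖v‖ ^ 2
  have hψ : ∀ t, HasDerivAt ψ
      (⟪gradient f (x + t • v) - gradient f x, v⟫ - L * t * ‖v‖ ^ 2) t := by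
    intro t
    have hquad := ((hasDerivAt_pow 2 t).const_mul (L / 2)).mul_const (‖v‖ ^ 2)
    refine (((hasDerivAt_comp_add_smul_of_differentiable hf x v t).sub
      ((hasDerivAt_id t).mul_const ⟪gradient f x, v⟫)).sub hquad).congr_deriv ?_
    rw [inner_sub_left]
    ring
  have hanti : AntitoneOn ψ (Set.Icc 0 1) := by
    refine antitoneOn_of_deriv_nonpos (convex_Icc 0 1)
      (fun t _ => (hψ t).continuousAt.continuousWithinAt)
      (fun t _ => (hψ t).differentiableAt.differentiableWithinAt) fun t ht => ?_
    rw [interior_Icc] at ht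
    rw [(hψ t).deriv, sub_nonpos]
    calc ⟪gradient f (x + t • v) - gradient f x, v⟫
        ≤ ‖gradient f (x + t • v) - gradient f x‖ * ‖v‖ := real_inner_le_norm _ _
      _ ≤ L * ‖x + t • v - x‖ * ‖v‖ := by gcongr; exact hlip _ _
      _ = L * t * ‖v‖ ^ 2 := by
        rw [add_sub_cancel_left, norm_smul, Real.norm_of_nonneg ht.1.le]; ring
  have h01 := hanti (Set.left_mem_Icc.2 zero_le_one) (Set.right_mem_Icc.2 zero_le_one)
    zero_le_one
  simp only [ψ, v, one_smul, add_sub_cancel, zero_smul, add_zero] at h01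
  linarith

end DescentLemma

section StrongConvexity

variable {E : Type*} [NormedAddCommGroup E] [InnerProductSpace ℝ E]

theorem ConvexOn.strongConvexOn_sq_norm_sub_add {s : Set E} {ψ : E → ℝ} (hψ : ConvexOn ℝ s ψ)
    (m : ℝ) (z : E) : StrongConvexOn s m (fun w => m / 2 * ‖w - z‖ ^ 2 + ψ w) := by
  rw [strongConvexOn_iff_convex]
  -- Subtracting `m/2 ‖w‖²` leaves `ψ` plus an affine function of `w`.
  refine (((-m) • innerₛₗ ℝ z).convexOn hψ.1 |>.add hψ |>.add_const (m / 2 * ‖z‖ ^ 2)).congr ?_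
  intro w _
  simp only [Pi.add_apply, LinearMap.smul_apply, innerₛₗ_apply_apply, smul_eq_mul,
    norm_sub_sq_real, real_inner_comm w z]
  ring

theorem StrongConvexOn.add_sq_norm_sub_le_of_isMinOn {s : Set E} {m : ℝ} {φ : E → ℝ}
    (hφ : StrongConvexOn s m φ) {x y : E} (hx : x ∈ s) (hy : y ∈ s) (hmin : IsMinOn φ s x) :
    φ x + m / 2 * ‖y - x‖ ^ 2 ≤ φ y := by
  set c := m / 2 * ‖y - x‖ ^ 2 with hc
  have hsmall : ∀ t ∈ Set.Ioc (0 : ℝ) 1, φ x + c - φ y ≤ t * c := by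
    rintro t ⟨ht0, ht1⟩
    have hmin_t := hmin (hφ.1 hy hx ht0.le (sub_nonneg.2 ht1) (add_sub_cancel t 1))
    have hconv := hφ.2 hy hx ht0.le (sub_nonneg.2 ht1) (add_sub_cancel t 1)
    simp only [Set.mem_ofPred_eq, smul_eq_mul] at hmin_t hconv
    have key : t * (φ x + c - φ y) ≤ t * (t * c) := by rw [hc]; linarith
    exact le_of_mul_le_mul_left key ht0
  have hlim : Tendsto (fun t : ℝ => t * c) (𝓝[>] 0) (𝓝 (0 * c)) :=
    (continuous_id.mul continuous_const).continuousAt.tendsto.mono_left nhdsWithin_le_nhds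
  have := ge_of_tendsto hlim (eventually_of_mem (Ioc_mem_nhdsGT zero_lt_one) hsmall)
  linarith

end StrongConvexity

theorem convexOn_toReal_of_ereal {E : Type*} [AddCommGroup E] [Module ℝ E] {h : E → EReal}
    (hbot : ∀ w, h w ≠ ⊥)
    (hconv : ∀ a b : E, ∀ s t : ℝ, 0 ≤ s → 0 ≤ t → s + t = 1 →
      h (s • a + t • b) ≤ (s : EReal) * h a + (t : EReal) * h b) :
    ConvexOn ℝ {w | h w ≠ ⊤} (fun w => (h w).toReal) := by
  have hcomb : ∀ a ∈ {w | h w ≠ ⊤}, ∀ b ∈ {w | h w ≠ ⊤}, ∀ s t : ℝ, 0 ≤ s → 0 ≤ t → s + t = 1 →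
      h (s • a + t • b) ≤ ((s * (h a).toReal + t * (h b).toReal : ℝ) : EReal) := by
    intro a ha b hb s t hs ht hst
    rw [EReal.coe_add, EReal.coe_mul, EReal.coe_mul, EReal.coe_toReal ha (hbot a),
      EReal.coe_toReal hb (hbot b)]
    exact hconv a b s t hs ht hst
  refine ⟨fun a ha b hb s t hs ht hst => ?_, fun a ha b hb s t hs ht hst => ?_⟩
  · exact ne_top_of_le_ne_top (EReal.coe_ne_top _) (hcomb a ha b hb s t hs ht hst)
  · have h := EReal.toReal_le_toReal (hcomb a ha b hb s t hs ht hst) (hbot _) (EReal.coe_ne_top _)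
    rwa [EReal.toReal_coe] at h

theorem isMinOn_add_toReal_of_ereal {E : Type*} {a : E → ℝ} {h : E → EReal} {x : E}
    (hbot : ∀ w, h w ≠ ⊥) (hx : h x ≠ ⊤) (hmin : ∀ w, (a x : EReal) + h x ≤ (a w : EReal) + h w) :
    IsMinOn (fun w => a w + (h w).toReal) {w | h w ≠ ⊤} x := by
  intro w hw
  have hxw := hmin w
  rw [← EReal.coe_toReal hx (hbot x), ← EReal.coe_toReal hw (hbot w)] at hxw
  exact_mod_cast hxw

theorem stmt_7_general (d : ℕ) (L μ : ℝ)
    (f : EuclideanSpace ℝ (Fin d) → ℝ) (hf : Differentiable ℝ f)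
    (hlip : ∀ x y : EuclideanSpace ℝ (Fin d),
      ‖gradient f x - gradient f y‖ ≤ L * ‖x - y‖)
    (r : EuclideanSpace ℝ (Fin d) → EReal)
    (hrbot : ∀ x, r x ≠ ⊥)
    (u : EuclideanSpace ℝ (Fin d) → EuclideanSpace ℝ (Fin d) → EReal)
    (hubot : ∀ x y, u x y ≠ ⊥)
    (hu1 : ∀ y, u y y = r y)
    (hu2 : ∀ x y, r x ≤ u x y)
    (z : EuclideanSpace ℝ (Fin d)) (hz : r z < ⊤)
    (huconv : ∀ a b : EuclideanSpace ℝ (Fin d), ∀ s t : ℝ, 0 ≤ s → 0 ≤ t → s + t = 1 →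
      u (s • a + t • b) z ≤ (s : EReal) * u a z + (t : EReal) * u b z)
    (g xp : EuclideanSpace ℝ (Fin d))
    (hxp : ∀ x : EuclideanSpace ℝ (Fin d),
      ((μ / 2 * ‖xp - z‖ ^ 2 + ⟪g, xp⟫ : ℝ) : EReal) + u xp z ≤
        ((μ / 2 * ‖x - z‖ ^ 2 + ⟪g, x⟫ : ℝ) : EReal) + u x z) :
    ((f xp : ℝ) : EReal) + r xp + (((2 * μ - L) / 2 * ‖xp - z‖ ^ 2 : ℝ) : EReal) ≤
      ((f z : ℝ) : EReal) + r z + ((⟪gradient f z - g, xp - z⟫ : ℝ) : EReal) := by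
  set D := {w | u w z ≠ ⊤}
  have hzD : z ∈ D := by simpa [D, hu1] using hz.ne
  have hxpD : xp ∈ D := by
    intro htop
    have h := hxp z
    rw [htop, EReal.add_top_of_ne_bot (EReal.coe_ne_bot _), top_le_iff] at h
    exact EReal.add_ne_top (EReal.coe_ne_top _) hzD h
  have hconv : ConvexOn ℝ D (fun w => ⟪g, w⟫ + (u w z).toReal) :=
    have hu := convexOn_toReal_of_ereal (hubot · z) huconv
    ((innerₛₗ ℝ g).convexOn hu.1).add hu
  have hmin : IsMinOn (fun w => μ / 2 * ‖w - z‖ ^ 2 + (⟪g, w⟫ + (u w z).toReal)) D xp := by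
    simpa only [add_assoc] using
      isMinOn_add_toReal_of_ereal (a := fun w => μ / 2 * ‖w - z‖ ^ 2 + ⟪g, w⟫) (hubot · z) hxpD hxp
  have hgrowth :=
    (hconv.strongConvexOn_sq_norm_sub_add μ z).add_sq_norm_sub_le_of_isMinOn hxpD hzD hmin
  have hdescent := le_add_inner_gradient_add_of_lipschitz_gradient hf hlip z xp
  have hrxp : r xp ≤ u xp z := hu2 xp z
  rw [← EReal.coe_toReal hxpD (hubot xp z)] at hrxp
  rw [← hu1 z, ← EReal.coe_toReal hzD (hubot z z),
    ← EReal.coe_toReal (ne_top_of_le_ne_top (EReal.coe_ne_top _) hrxp) (hrbot xp)]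
  have hrxp' := EReal.toReal_le_toReal hrxp (hrbot xp) (EReal.coe_ne_top _)
  simp only [EReal.toReal_coe, sub_self, norm_zero] at hrxp' hgrowth
  rw [norm_sub_rev z xp] at hgrowth
  norm_cast
  rw [inner_sub_left, inner_sub_right g xp z]
  linarith

/-- One-step descent inequality for the SVRMM update.
`f : ℝ^d → ℝ` is differentiable with `L`-Lipschitz gradient (`L ≥ 0`);
`r : ℝ^d → ℝ ∪ {+∞}` is proper (here: `EReal`-valued, never `⊥`, finite somewhere);
`u` is a surrogate of `r` (`u(y,y) = r(y)` and `u(x,y) ≥ r(x)`), never `⊥`, with `u(·, z)` convex;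
`F = f + r`, `μ > 0`, `r(z) < +∞`, and `x⁺` is a global minimizer of
`x ↦ (μ/2)‖x − z‖² + ⟨g, x⟩ + u(x, z)`. Then
`F(x⁺) + ((2μ − L)/2)‖x⁺ − z‖² ≤ F(z) + ⟨∇f(z) − g, x⁺ − z⟩`. -/
theorem stmt_7 (d : ℕ) (L μ : ℝ) (hL : 0 ≤ L) (hμ : 0 < μ)
    (f : EuclideanSpace ℝ (Fin d) → ℝ) (hf : Differentiable ℝ f)
    (hlip : ∀ x y : EuclideanSpace ℝ (Fin d),
      ‖gradient f x - gradient f y‖ ≤ L * ‖x - y‖)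
    (r : EuclideanSpace ℝ (Fin d) → EReal)
    (hrbot : ∀ x, r x ≠ ⊥) (hrproper : ∃ x, r x ≠ ⊤)
    (u : EuclideanSpace ℝ (Fin d) → EuclideanSpace ℝ (Fin d) → EReal)
    (hubot : ∀ x y, u x y ≠ ⊥)
    (hu1 : ∀ y, u y y = r y)
    (hu2 : ∀ x y, r x ≤ u x y)
    (z : EuclideanSpace ℝ (Fin d)) (hz : r z < ⊤)
    (huconv : ∀ a b : EuclideanSpace ℝ (Fin d), ∀ s t : ℝ, 0 ≤ s → 0 ≤ t → s + t = 1 →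
      u (s • a + t • b) z ≤ (s : EReal) * u a z + (t : EReal) * u b z)
    (g xp : EuclideanSpace ℝ (Fin d))
    (hxp : ∀ x : EuclideanSpace ℝ (Fin d),
      ((μ / 2 * ‖xp - z‖ ^ 2 + ⟪g, xp⟫ : ℝ) : EReal) + u xp z ≤
        ((μ / 2 * ‖x - z‖ ^ 2 + ⟪g, x⟫ : ℝ) : EReal) + u x z) :
    ((f xp : ℝ) : EReal) + r xp + (((2 * μ - L) / 2 * ‖xp - z‖ ^ 2 : ℝ) : EReal) ≤
      ((f z : ℝ) : EReal) + r z + ((⟪gradient f z - g, xp - z⟫ : ℝ) : EReal) :=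
  stmt_7_general d L μ f hf hlip r hrbot u hubot hu1 hu2 z hz huconv g xp hxp
end

section
/- Let f : ℝ^d → ℝ be differentiable with L-Lipschitz gradient (L ≥ 0), let r : ℝ^d → ℝ ∪ {+∞} be proper, and let u : ℝ^d × ℝ^d → ℝ ∪ {+∞} be a surrogate of r such that u(·, z) is convex. Set F = f + r, let μ > 0 and η > 0, fix z ∈ ℝ^d with r(z) < +∞ and g ∈ ℝ^d, and suppose x⁺ is a global minimizer over ℝ^d of the function x ↦ (μ/2)‖x − z‖² + ⟨g, x⟩ + u(x, z). Then F(x⁺) + ((2μ − L)/2 − 1/(2η))‖x⁺ − z‖² ≤ F(z) + (η/2)‖g − ∇f(z)‖². -/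
/-!
The objective `x ↦ (μ/2)‖x - z‖² + ⟪g, x⟫ + u(x, z)` is `μ`-strongly convex, so comparing its
minimizer `x⁺` with the points `(1 - t) x⁺ + t z` and letting `t → 0` gives the quadratic growth
bound `μ‖x⁺ - z‖² + ⟪g, x⁺⟫ + u(x⁺, z) ≤ ⟪g, z⟫ + r(z)`. Adding `r ≤ u(·, z)`, the descent lemma
`f(x⁺) ≤ f(z) + ⟪∇f(z), x⁺ - z⟫ + (L/2)‖x⁺ - z‖²`, and Young's inequality for
`⟪∇f(z) - g, x⁺ - z⟫` yields the claim.
-/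

open scoped RealInnerProductSpace

open Set Filter Topology

theorem add_two_mul_le_of_forall_segment {a b c : ℝ}
    (h : ∀ t ∈ Ioc (0 : ℝ) 1, c + a ≤ (1 - t) ^ 2 * c + ((1 - t) * a + t * b)) :
    a + 2 * c ≤ b := by
  have hdiv : ∀ t ∈ Ioc (0 : ℝ) 1, a + 2 * c - c * t ≤ b := by
    intro t ht
    have := h t ht
    nlinarith [ht.1]
  have hlim : Tendsto (fun t : ℝ => a + 2 * c - c * t) (𝓝[>] 0) (𝓝 (a + 2 * c)) := by
    have : Tendsto (fun t : ℝ => a + 2 * c - c * t) (𝓝 0) (𝓝 (a + 2 * c - c * 0)) :=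
      tendsto_const_nhds.sub (tendsto_id.const_mul c)
    simpa using this.mono_left nhdsWithin_le_nhds
  exact le_of_tendsto hlim (eventually_of_mem (Ioc_mem_nhdsGT zero_lt_one) hdiv)

section

variable {E : Type*} [NormedAddCommGroup E] [InnerProductSpace ℝ E]

theorem real_inner_le_young {η : ℝ} (hη : 0 < η) (a b : E) :
    ⟪a, b⟫ ≤ η / 2 * ‖a‖ ^ 2 + 1 / (2 * η) * ‖b‖ ^ 2 := by
  have hsq : 0 ≤ ‖η • a - b‖ ^ 2 := sq_nonneg _
  rw [norm_sub_sq_real, norm_smul, real_inner_smul_left, Real.norm_of_nonneg hη.le] at hsq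
  have key : 2 * η * ⟪a, b⟫ ≤ 2 * η * (η / 2 * ‖a‖ ^ 2 + 1 / (2 * η) * ‖b‖ ^ 2) := by
    field_simp
    nlinarith
  exact le_of_mul_le_mul_left key (by positivity)

theorem le_add_inner_gradient_of_lipschitz_gradient [CompleteSpace E] {f : E → ℝ} {L : ℝ}
    (hf : Differentiable ℝ f) (hlip : ∀ x y, ‖gradient f x - gradient f y‖ ≤ L * ‖x - y‖)
    (x y : E) : f y ≤ f x + ⟪gradient f x, y - x⟫ + L / 2 * ‖y - x‖ ^ 2 := by
  set v := y - x
  have hφ : ∀ t : ℝ, HasDerivAt (fun t : ℝ => f (x + t • v)) ⟪gradient f (x + t • v), v⟫ t := by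
    intro t
    have hline : HasDerivAt (fun t : ℝ => x + t • v) v t := by
      simpa using ((hasDerivAt_id t).smul_const v).const_add x
    simpa [Function.comp_def] using (hf _).hasGradientAt.hasFDerivAt.comp_hasDerivAt t hline
  have hB : ∀ t : ℝ,
      HasDerivAt (fun t : ℝ => f x + t * ⟪gradient f x, v⟫ + L / 2 * t ^ 2 * ‖v‖ ^ 2)
        (⟪gradient f x, v⟫ + L * t * ‖v‖ ^ 2) t := by
    intro t
    refine ((((hasDerivAt_id t).mul_const ⟪gradient f x, v⟫).const_add (f x)).add
      (((hasDerivAt_pow 2 t).const_mul (L / 2)).mul_const (‖v‖ ^ 2))).congr_deriv ?_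
    simp only [Nat.cast_ofNat]
    ring
  have hbound : ∀ t ∈ Ico (0 : ℝ) 1,
      ⟪gradient f (x + t • v), v⟫ ≤ ⟪gradient f x, v⟫ + L * t * ‖v‖ ^ 2 := by
    rintro t ⟨ht, -⟩
    have : ⟪gradient f (x + t • v) - gradient f x, v⟫ ≤ L * t * ‖v‖ ^ 2 :=
      calc ⟪gradient f (x + t • v) - gradient f x, v⟫
          ≤ ‖gradient f (x + t • v) - gradient f x‖ * ‖v‖ := real_inner_le_norm _ _
        _ ≤ L * ‖t • v‖ * ‖v‖ := by
          gcongr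
          simpa using hlip (x + t • v) x
        _ = L * t * ‖v‖ ^ 2 := by rw [norm_smul, Real.norm_of_nonneg ht]; ring
    rw [inner_sub_left] at this
    linarith
  have := image_le_of_deriv_right_le_deriv_boundary
    (fun t _ => (hφ t).continuousAt.continuousWithinAt) (fun t _ => (hφ t).hasDerivWithinAt)
    (by simp) (fun t _ => (hB t).continuousAt.continuousWithinAt)
    (fun t _ => (hB t).hasDerivWithinAt)
    hbound (right_mem_Icc.2 zero_le_one)
  simpa [v] using this

theorem quadratic_growth_of_isMin_prox {μ : ℝ} {g z xp : E} {h : E → EReal}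
    (hconv : ∀ a b : E, ∀ s t : ℝ, 0 ≤ s → 0 ≤ t → s + t = 1 →
      h (s • a + t • b) ≤ (s : EReal) * h a + (t : EReal) * h b)
    (hmin : ∀ x : E, ((μ / 2 * ‖xp - z‖ ^ 2 + ⟪g, xp⟫ : ℝ) : EReal) + h xp ≤
      ((μ / 2 * ‖x - z‖ ^ 2 + ⟪g, x⟫ : ℝ) : EReal) + h x) :
    ((μ * ‖xp - z‖ ^ 2 + ⟪g, xp⟫ : ℝ) : EReal) + h xp ≤ ((⟪g, z⟫ : ℝ) : EReal) + h z := by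
  have hz := hmin z
  generalize hB : h z = B at hz ⊢
  generalize hA : h xp = A at hmin hz ⊢
  induction B using EReal.rec with
  | bot =>
    rw [EReal.add_bot, le_bot_iff, EReal.add_eq_bot_iff] at hz
    obtain rfl := hz.resolve_left (EReal.coe_ne_bot _)
    simp
  | top => simp
  | coe B =>
    induction A using EReal.rec with
    | bot => simp
    | top =>
      rw [EReal.add_top_of_ne_bot (EReal.coe_ne_bot _), top_le_iff, ← EReal.coe_add] at hz
      exact absurd hz (EReal.coe_ne_top _)
    | coe A =>
      norm_cast
      suffices ⟪g, xp⟫ + A + 2 * (μ / 2 * ‖xp - z‖ ^ 2) ≤ ⟪g, z⟫ + B by linarith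
      refine add_two_mul_le_of_forall_segment fun t ⟨ht0, ht1⟩ => ?_
      set xt := (1 - t) • xp + t • z
      have hxt : h xt ≤ (((1 - t) * A + t * B : ℝ) : EReal) :=
        (hconv xp z (1 - t) t (by linarith) ht0.le (by ring)).trans_eq (by rw [hA, hB]; norm_cast)
      have hseg : ((μ / 2 * ‖xp - z‖ ^ 2 + ⟪g, xp⟫ : ℝ) : EReal) + A ≤
          ((μ / 2 * ‖xt - z‖ ^ 2 + ⟪g, xt⟫ : ℝ) : EReal) + (((1 - t) * A + t * B : ℝ) : EReal) :=
        (hmin xt).trans (by gcongr)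
      have hnorm : ‖xt - z‖ = (1 - t) * ‖xp - z‖ := by
        rw [show xt - z = (1 - t) • (xp - z) by module, norm_smul,
          Real.norm_of_nonneg (by linarith)]
      have hinner : ⟪g, xt⟫ = (1 - t) * ⟪g, xp⟫ + t * ⟪g, z⟫ := by
        rw [inner_add_right, real_inner_smul_right, real_inner_smul_right]
      norm_cast at hseg
      rw [hnorm, hinner] at hseg
      linarith

end

theorem stmt_8_general (d : ℕ) (L μ η : ℝ) (hη : 0 < η)
    (f : EuclideanSpace ℝ (Fin d) → ℝ) (hf : Differentiable ℝ f)
    (hlip : ∀ x y : EuclideanSpace ℝ (Fin d),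
      ‖gradient f x - gradient f y‖ ≤ L * ‖x - y‖)
    (r : EuclideanSpace ℝ (Fin d) → EReal)
    (hrbot : ∀ x, r x ≠ ⊥)
    (u : EuclideanSpace ℝ (Fin d) → EuclideanSpace ℝ (Fin d) → EReal)
    (hu1 : ∀ y, u y y = r y)
    (hu2 : ∀ x y, r x ≤ u x y)
    (z : EuclideanSpace ℝ (Fin d)) (hz : r z < ⊤)
    (huconv : ∀ a b : EuclideanSpace ℝ (Fin d), ∀ s t : ℝ, 0 ≤ s → 0 ≤ t → s + t = 1 →
      u (s • a + t • b) z ≤ (s : EReal) * u a z + (t : EReal) * u b z)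
    (g xp : EuclideanSpace ℝ (Fin d))
    (hxp : ∀ x : EuclideanSpace ℝ (Fin d),
      ((μ / 2 * ‖xp - z‖ ^ 2 + ⟪g, xp⟫ : ℝ) : EReal) + u xp z ≤
        ((μ / 2 * ‖x - z‖ ^ 2 + ⟪g, x⟫ : ℝ) : EReal) + u x z) :
    ((f xp : ℝ) : EReal) + r xp +
        ((((2 * μ - L) / 2 - 1 / (2 * η)) * ‖xp - z‖ ^ 2 : ℝ) : EReal) ≤
      ((f z : ℝ) : EReal) + r z + ((η / 2 * ‖g - gradient f z‖ ^ 2 : ℝ) : EReal) := by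
  have hgrowth := quadratic_growth_of_isMin_prox (h := (u · z)) huconv hxp
  have hr_le_u := hu2 xp z
  rw [hu1] at hgrowth
  lift r z to ℝ using ⟨hz.ne, hrbot z⟩ with Rz
  have huxp_top : u xp z ≠ ⊤ := by
    intro htop
    rw [htop, EReal.add_top_of_ne_bot (EReal.coe_ne_bot _), top_le_iff, ← EReal.coe_add]
      at hgrowth
    exact EReal.coe_ne_top _ hgrowth
  lift u xp z to ℝ using ⟨huxp_top, ne_bot_of_le_ne_bot (hrbot xp) hr_le_u⟩ with A
  lift r xp to ℝ using ⟨ne_top_of_le_ne_top (EReal.coe_ne_top A) hr_le_u, hrbot xp⟩ with Rxp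
  norm_cast at hgrowth hr_le_u ⊢
  have hdescent := le_add_inner_gradient_of_lipschitz_gradient hf hlip z xp
  have hyoung := real_inner_le_young hη (gradient f z - g) (xp - z)
  rw [norm_sub_rev] at hyoung
  simp only [inner_sub_left, inner_sub_right] at hdescent hyoung
  linarith

/-- One-step descent inequality for the SVRMM update combined with Young's
inequality. `f : ℝ^d → ℝ` is differentiable with `L`-Lipschitz gradient (`L ≥ 0`);
`r : ℝ^d → ℝ ∪ {+∞}` is proper (here: `EReal`-valued, never `⊥`, finite somewhere);
`u` is a surrogate of `r` (`u(y,y) = r(y)` and `u(x,y) ≥ r(x)`), never `⊥`, with `u(·, z)` convex;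
`F = f + r`, `μ > 0`, `η > 0`, `r(z) < +∞`, and `x⁺` is a global minimizer of
`x ↦ (μ/2)‖x − z‖² + ⟨g, x⟩ + u(x, z)`. Then
`F(x⁺) + ((2μ − L)/2 − 1/(2η))‖x⁺ − z‖² ≤ F(z) + (η/2)‖g − ∇f(z)‖²`. -/
theorem stmt_8 (d : ℕ) (L μ η : ℝ) (hL : 0 ≤ L) (hμ : 0 < μ) (hη : 0 < η)
    (f : EuclideanSpace ℝ (Fin d) → ℝ) (hf : Differentiable ℝ f)
    (hlip : ∀ x y : EuclideanSpace ℝ (Fin d),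
      ‖gradient f x - gradient f y‖ ≤ L * ‖x - y‖)
    (r : EuclideanSpace ℝ (Fin d) → EReal)
    (hrbot : ∀ x, r x ≠ ⊥) (hrproper : ∃ x, r x ≠ ⊤)
    (u : EuclideanSpace ℝ (Fin d) → EuclideanSpace ℝ (Fin d) → EReal)
    (hubot : ∀ x y, u x y ≠ ⊥)
    (hu1 : ∀ y, u y y = r y)
    (hu2 : ∀ x y, r x ≤ u x y)
    (z : EuclideanSpace ℝ (Fin d)) (hz : r z < ⊤)
    (huconv : ∀ a b : EuclideanSpace ℝ (Fin d), ∀ s t : ℝ, 0 ≤ s → 0 ≤ t → s + t = 1 →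
      u (s • a + t • b) z ≤ (s : EReal) * u a z + (t : EReal) * u b z)
    (g xp : EuclideanSpace ℝ (Fin d))
    (hxp : ∀ x : EuclideanSpace ℝ (Fin d),
      ((μ / 2 * ‖xp - z‖ ^ 2 + ⟪g, xp⟫ : ℝ) : EReal) + u xp z ≤
        ((μ / 2 * ‖x - z‖ ^ 2 + ⟪g, x⟫ : ℝ) : EReal) + u x z) :
    ((f xp : ℝ) : EReal) + r xp +
        ((((2 * μ - L) / 2 - 1 / (2 * η)) * ‖xp - z‖ ^ 2 : ℝ) : EReal) ≤
      ((f z : ℝ) : EReal) + r z + ((η / 2 * ‖g - gradient f z‖ ^ 2 : ℝ) : EReal) :=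
  stmt_8_general d L μ η hη f hf hlip r hrbot u hu1 hu2 z hz huconv g xp hxp
end
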